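/- arXiv:2007.08729 — 6 statements merged into one kernel-verified Lean document; each statement's English description precedes it below -/
import Mathlib

section
/- Let d ∈ ℕ, β > 1 and m ∈ ℕ. Then |D^d_β(m)| = Σ_{k∈Δ^d_β(m)} 2^{|k|_1} ≤ (β/(β−1)) · d · (1 − 2^{−1/(β−1)})^{−d} · 2^m, and consequently the grid G^d_β(m) = {2^{−k}s : k ∈ Δ^d_β(m), s ∈ Z^d(k+𝟙)} (with 𝟙=(1,…,1)) satisfies |G^d_β(m)| ≤ (β/(β−1)) · d · 2^d · (1 − 2^{−1/(β−1)})^{−d} · 2^m. -/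
open MeasureTheory Finset
open scoped ENNReal NNReal

noncomputable section

/-- The closed unit cube `[0,1]^d` in `ℝ^d`. -/
def unitCube (d : ℕ) : Set (Fin d → ℝ) := Set.Icc 0 1

/-- Second difference operator in coordinate `i` with step `h`. -/
def delta2 {d : ℕ} (i : Fin d) (h : ℝ) (f : (Fin d → ℝ) → ℝ) : (Fin d → ℝ) → ℝ :=
  fun x => f (Function.update x i (x i + 2 * h)) - 2 * f (Function.update x i (x i + h)) + f x

/-- Mixed second difference operator `Δ^{2,u}_h`. -/
def deltaMixed {d : ℕ} (u : Finset (Fin d)) (h : Fin d → ℝ)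
    (f : (Fin d → ℝ) → ℝ) : (Fin d → ℝ) → ℝ :=
  u.toList.foldr (fun i g => delta2 i (h i) g) f

/-- Membership in the unit ball `Ů^α_∞` of the Hölder–Zygmund space `H̊^α_∞` of mixed
smoothness `α` on the unit cube, including the homogeneous boundary condition. -/
def UnitBallHZ (d : ℕ) (α : ℝ) (f : (Fin d → ℝ) → ℝ) : Prop :=
  ContinuousOn f (unitCube d) ∧
  (∀ x ∈ unitCube d, (∃ j, x j = 0 ∨ x j = 1) → f x = 0) ∧
  ∀ (u : Finset (Fin d)) (x h : Fin d → ℝ), x ∈ unitCube d →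
    (∀ i ∈ u, 0 ≤ h i ∧ x i + 2 * h i ≤ 1) →
    |deltaMixed u h f x| ≤ ∏ i ∈ u, h i ^ α

/-- `g` is the weak `i`-th partial derivative of `f` on the unit cube. -/
def IsWeakDeriv {d : ℕ} (i : Fin d) (f g : (Fin d → ℝ) → ℝ) : Prop :=
  ∀ φ : (Fin d → ℝ) → ℝ, ContDiff ℝ (⊤ : ℕ∞) φ → HasCompactSupport φ →
    tsupport φ ⊆ interior (unitCube d) →
    ∫ x in unitCube d, f x * fderiv ℝ φ x (Pi.single i 1) =
      - ∫ x in unitCube d, g x * φ x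

/-- `(Σ_i ∫ |g i|^p)^{1/p} ≤ K` (resp. `max_i esssup |g i| ≤ K` when `p = ∞`). -/
def WpNormLe (d : ℕ) (p : ℝ≥0∞) (g : Fin d → (Fin d → ℝ) → ℝ) (K : ℝ) : Prop :=
  (p = ⊤ → ∀ i, ∀ᵐ x ∂(volume.restrict (unitCube d)), |g i x| ≤ K) ∧
  (p ≠ ⊤ → (∑ i, ∫⁻ x in unitCube d, ENNReal.ofReal (|g i x| ^ p.toReal)) ≤
      ENNReal.ofReal (K ^ p.toReal))

/-- `∥f∥_{W̊_p^1} ≤ K` : `f` has weak partial derivatives on the cube whose `W_p^1`-norm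
is at most `K`. -/
def SobolevNormLe (d : ℕ) (p : ℝ≥0∞) (f : (Fin d → ℝ) → ℝ) (K : ℝ) : Prop :=
  ∃ g : Fin d → (Fin d → ℝ) → ℝ, (∀ i, IsWeakDeriv i f (g i)) ∧ WpNormLe d p g K

open scoped Classical in
/-- `(p+1)^{c/p}`, interpreted as `1` for `p = ∞`. -/
def pFactor (p : ℝ≥0∞) (c : ℝ) : ℝ := if p = ⊤ then 1 else (p.toReal + 1) ^ (c / p.toReal)

open scoped Classical in
/-- `|2^k|_p`. -/
def pNorm2k (d : ℕ) (p : ℝ≥0∞) (k : Fin d → ℕ) : ℝ :=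
  if p = ⊤ then (2:ℝ) ^ (Finset.univ.sup k)
  else (∑ i, (2:ℝ) ^ (p.toReal * (k i : ℝ))) ^ (1 / p.toReal)

/-- The hat function `M₂`. -/
def hatM2 (x : ℝ) : ℝ := max 0 (1 - |x - 1|)

/-- The tensor product hat function `φ_{k,s}`. -/
def hatTensor {d : ℕ} (k s : Fin d → ℕ) (x : Fin d → ℝ) : ℝ :=
  ∏ i, hatM2 ((2:ℝ) ^ (k i + 1) * x i - 2 * s i)

/-- The Faber coefficient `λ_{k,s}(f)`. -/
def faberCoeff {d : ℕ} (f : (Fin d → ℝ) → ℝ) (k s : Fin d → ℕ) : ℝ :=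
  (-(1:ℝ)/2) ^ d *
    deltaMixed Finset.univ (fun i => ((2:ℝ) ^ (k i + 1))⁻¹) f
      (fun i => (s i : ℝ) / 2 ^ (k i))

/-- `q_k(f)`. -/
def qOp {d : ℕ} (f : (Fin d → ℝ) → ℝ) (k : Fin d → ℕ) (x : Fin d → ℝ) : ℝ :=
  ∑ s ∈ Fintype.piFinset (fun i => Finset.range (2 ^ k i)), faberCoeff f k s * hatTensor k s x

/-- `k ∈ Δ^d_β(m)`. -/
def inDeltaSet (d m : ℕ) (β : ℝ) (k : Fin d → ℕ) : Prop :=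
  ∃ j ≤ m, (∑ i, k i) + j = m ∧ (m : ℤ) - ⌊β * (j : ℝ)⌋ ≤ ((Finset.univ.sup k : ℕ) : ℤ)

open scoped Classical in
/-- `Δ^d_β(m)` as a `Finset`. -/
def deltaFinset (d m : ℕ) (β : ℝ) : Finset (Fin d → ℕ) :=
  (Fintype.piFinset fun _ : Fin d => Finset.range (m + 1)).filter (inDeltaSet d m β)

open scoped Classical in
/-- `Δ^d(m) \ Δ^d_β(m)` as a `Finset`. -/
def smolyakDiff (d m : ℕ) (β : ℝ) : Finset (Fin d → ℕ) :=
  (Fintype.piFinset fun _ : Fin d => Finset.range (m + 1)).filter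
    (fun k => (∑ i, k i) ≤ m ∧ ¬ inDeltaSet d m β k)

/-- `R_β(m, f)`. -/
def Rop (d m : ℕ) (β : ℝ) (f : (Fin d → ℝ) → ℝ) (x : Fin d → ℝ) : ℝ :=
  ∑ k ∈ deltaFinset d m β, qOp f k x

/-- The constant `K₁ = K₁(α, β, p)`. -/
def Kone (α β : ℝ) (p : ℝ≥0∞) : ℝ :=
  2 * pFactor p 1 * max (2 * β / (β - 1)) (1 / ((2:ℝ) ^ (α - 1) - 1))

/-- The constant `B = B(d, α, β, p)`. -/
def Bconst (d : ℕ) (α β : ℝ) (p : ℝ≥0∞) : ℝ :=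
  (1 - (2:ℝ) ^ (-1 / (β - 1))) *
    ((pFactor p 1 * (2:ℝ) ^ (α + 1) * (1 - (2:ℝ) ^ (-(β - α) / (β - 1)))) /
        (d:ℝ) ^ (2 * α / (d:ℝ))) ^ (1 / (α - 1))

/-- The threshold `ε₀`. -/
def epsZero (d : ℕ) (α β : ℝ) (p : ℝ≥0∞) : ℝ :=
  min 1 (min ((d:ℝ) / ((2:ℝ) ^ (α * (d:ℝ)) * (1 - (2:ℝ) ^ (1 - α))))
    (Kone α β p * (d:ℝ) ^ 2 /
      (pFactor p (d:ℝ) * (2:ℝ) ^ ((α + 1) * (d:ℝ)) *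
        (1 - (2:ℝ) ^ (-(β - α) / (β - 1))) ^ d)))

/-- A deep ReLU neural network with input dimension `d`. -/
structure ReLUNN (d : ℕ) where
  depth : ℕ
  two_le_depth : 2 ≤ depth
  width : ℕ → ℕ
  width_zero : width 0 = d
  width_depth : width depth = 1
  weight : (ℓ : ℕ) → Matrix (Fin (width (ℓ + 1))) (Fin (width ℓ)) ℝ
  bias : (ℓ : ℕ) → Fin (width (ℓ + 1)) → ℝ

namespace ReLUNN

variable {d : ℕ}

/-- The vector of values computed at layer `ℓ` (with ReLU applied at hidden layers). -/
def hidden (Φ : ReLUNN d) : (ℓ : ℕ) → (Fin d → ℝ) → Fin (Φ.width ℓ) → ℝ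
  | 0, x => fun i => x (Fin.cast Φ.width_zero i)
  | ℓ + 1, x => fun i => max 0 ((Φ.weight ℓ).mulVec (Φ.hidden ℓ x) i + Φ.bias ℓ i)

/-- Index of the single output node. -/
def outIdx (Φ : ReLUNN d) : Fin (Φ.width (Φ.depth - 1 + 1)) :=
  ⟨0, by
    have h2 := Φ.two_le_depth
    have h : Φ.depth - 1 + 1 = Φ.depth := by omega
    rw [h, Φ.width_depth]; omega⟩

/-- The output `N(Φ, x)`: no activation is applied at the last layer. -/
def output (Φ : ReLUNN d) (x : Fin d → ℝ) : ℝ :=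
  (Φ.weight (Φ.depth - 1)).mulVec (Φ.hidden (Φ.depth - 1) x) Φ.outIdx
    + Φ.bias (Φ.depth - 1) Φ.outIdx

/-- The size `W(Φ)`: the number of nonzero weights and biases. -/
def size (Φ : ReLUNN d) : ℕ :=
  ∑ ℓ ∈ Finset.range Φ.depth,
    ({ij : Fin (Φ.width (ℓ + 1)) × Fin (Φ.width ℓ) | Φ.weight ℓ ij.1 ij.2 ≠ 0}.ncard +
      {i : Fin (Φ.width (ℓ + 1)) | Φ.bias ℓ i ≠ 0}.ncard)

/-- The width `N_w(Φ)`. -/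
def nwidth (Φ : ReLUNN d) : ℕ := (Finset.range (Φ.depth + 1)).sup Φ.width

/-- An architecture: a network all of whose entries are `0` or `1`. -/
def IsArchitecture (A : ReLUNN d) : Prop :=
  (∀ ℓ i j, A.weight ℓ i j = 0 ∨ A.weight ℓ i j = 1) ∧
  (∀ ℓ i, A.bias ℓ i = 0 ∨ A.bias ℓ i = 1)

/-- `Φ` has architecture `A`: the dimensions agree and zero entries of `A` force zero
entries of `Φ`. -/
def HasArch (Φ A : ReLUNN d) : Prop :=
  ∃ (_ : Φ.depth = A.depth) (hw : ∀ ℓ, Φ.width ℓ = A.width ℓ),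
    (∀ (ℓ : ℕ) (i : Fin (Φ.width (ℓ + 1))) (j : Fin (Φ.width ℓ)),
      A.weight ℓ (Fin.cast (hw (ℓ + 1)) i) (Fin.cast (hw ℓ) j) = 0 → Φ.weight ℓ i j = 0) ∧
    (∀ (ℓ : ℕ) (i : Fin (Φ.width (ℓ + 1))),
      A.bias ℓ (Fin.cast (hw (ℓ + 1)) i) = 0 → Φ.bias ℓ i = 0)

end ReLUNN

end
noncomputable section

/-- A special deep ReLU neural network: in each hidden layer the first `d` nodes
(source channels, copying the input forward) and the last node (collation channel,
accumulating intermediate outputs) are free of the activation function. -/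
structure SpecialReLUNN (d : ℕ) where
  depth : ℕ
  two_le_depth : 2 ≤ depth
  width : ℕ → ℕ
  width_zero : width 0 = d
  width_depth : width depth = 1
  width_hidden : ∀ ℓ, 0 < ℓ → ℓ < depth → d + 1 ≤ width ℓ
  weight : (ℓ : ℕ) → Matrix (Fin (width (ℓ + 1))) (Fin (width ℓ)) ℝ
  bias : (ℓ : ℕ) → Fin (width (ℓ + 1)) → ℝ
  /-- the source channels simply copy the input forward -/
  source_weight : ∀ ℓ, ℓ + 1 < depth → ∀ (i : Fin (width (ℓ + 1))) (j : Fin (width ℓ)),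
    (i : ℕ) < d → weight ℓ i j = if (j : ℕ) = (i : ℕ) then 1 else 0
  source_bias : ∀ ℓ, ℓ + 1 < depth → ∀ i : Fin (width (ℓ + 1)), (i : ℕ) < d → bias ℓ i = 0
  /-- the collation channel never feeds forward into subsequent computations -/
  collation_no_forward : ∀ ℓ, 0 < ℓ → ℓ + 1 < depth →
    ∀ (i : Fin (width (ℓ + 1))) (j : Fin (width ℓ)),
      (j : ℕ) = width ℓ - 1 → (i : ℕ) ≠ width (ℓ + 1) - 1 → weight ℓ i j = 0
  /-- the collation channel accumulates previous calculations by addition -/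
  collation_accum : ∀ ℓ, 0 < ℓ → ℓ + 1 < depth →
    ∀ (i : Fin (width (ℓ + 1))) (j : Fin (width ℓ)),
      (j : ℕ) = width ℓ - 1 → (i : ℕ) = width (ℓ + 1) - 1 → weight ℓ i j = 1

namespace SpecialReLUNN

variable {d : ℕ}

/-- Values at layer `ℓ`: ReLU is applied at hidden nodes except the `d` source nodes
and the collation node. -/
def hidden (Φ : SpecialReLUNN d) : (ℓ : ℕ) → (Fin d → ℝ) → Fin (Φ.width ℓ) → ℝ
  | 0, x => fun i => x (Fin.cast Φ.width_zero i)
  | ℓ + 1, x => fun i =>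
      if (i : ℕ) < d ∨ (i : ℕ) = Φ.width (ℓ + 1) - 1 then
        (Φ.weight ℓ).mulVec (Φ.hidden ℓ x) i + Φ.bias ℓ i
      else max 0 ((Φ.weight ℓ).mulVec (Φ.hidden ℓ x) i + Φ.bias ℓ i)

/-- Index of the single output node. -/
def outIdx (Φ : SpecialReLUNN d) : Fin (Φ.width (Φ.depth - 1 + 1)) :=
  ⟨0, by
    have h2 := Φ.two_le_depth
    have h : Φ.depth - 1 + 1 = Φ.depth := by omega
    rw [h, Φ.width_depth]; omega⟩

/-- The output of a special network. -/
def output (Φ : SpecialReLUNN d) (x : Fin d → ℝ) : ℝ :=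
  (Φ.weight (Φ.depth - 1)).mulVec (Φ.hidden (Φ.depth - 1) x) Φ.outIdx
    + Φ.bias (Φ.depth - 1) Φ.outIdx

/-- The width `N_w(Φ)`. -/
def nwidth (Φ : SpecialReLUNN d) : ℕ := (Finset.range (Φ.depth + 1)).sup Φ.width

end SpecialReLUNN

/-- The quadratic B-spline `M₃` with knots `0, 1, 2, 3`. -/
def M3spline (x : ℝ) : ℝ :=
  if 0 ≤ x ∧ x < 1 then x ^ 2 / 2
  else if 1 ≤ x ∧ x < 2 then (-2 * x ^ 2 + 6 * x - 3) / 2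
  else if 2 ≤ x ∧ x < 3 then (3 - x) ^ 2 / 2
  else 0

/-- `ψ(x) = M₃(3x)`. -/
def psiQ (x : ℝ) : ℝ := M3spline (3 * x)

/-- `ψ_{k,s}(x) = ψ(2^k x - s + 1)`. -/
def psiks (k s : ℕ) (x : ℝ) : ℝ := psiQ ((2:ℝ) ^ k * x - s + 1)

end
private lemma geo_le {x : ℝ} (h0 : 0 ≤ x) (h1 : x < 1) (n : ℕ) :
    ∑ a ∈ Finset.range n, x ^ a ≤ (1 - x)⁻¹ := by
  have hx1 : (0:ℝ) < 1 - x := by linarith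
  have hxn : 0 ≤ x ^ n := pow_nonneg h0 n
  rw [geom_sum_eq (by intro h; rw [h] at h1; linarith : x ≠ 1) n]
  have h2 : (x ^ n - 1) / (x - 1) = (1 - x ^ n) / (1 - x) := by
    rw [div_eq_div_iff (by linarith) (by linarith)]; ring
  rw [h2, div_le_iff₀ hx1, inv_mul_cancel₀ (ne_of_gt hx1)]
  linarith

set_option maxHeartbeats 1000000 in
/-- Lemma A.2 of the paper: cardinality bounds for `D^d_β(m)` and for
the sparse grid `G^d_β(m)`. -/
theorem card_bound (d : ℕ) (hd : 0 < d) (β : ℝ) (hβ : 1 < β) (m : ℕ) (hm : 1 ≤ m) :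
    (∑ k ∈ deltaFinset d m β, (2:ℝ) ^ (∑ i, k i))
        ≤ β / (β - 1) * d * ((1 - (2:ℝ) ^ (-1 / (β - 1))) ^ d)⁻¹ * 2 ^ m ∧
    (({x : Fin d → ℝ | ∃ k ∈ deltaFinset d m β, ∃ s : Fin d → ℕ,
          (∀ i, s i < 2 ^ (k i + 1)) ∧ x = fun i => (s i : ℝ) / 2 ^ (k i)}.ncard : ℝ)
        ≤ β / (β - 1) * d * 2 ^ d * ((1 - (2:ℝ) ^ (-1 / (β - 1))) ^ d)⁻¹ * 2 ^ m) := by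
  classical
  have hβ1 : (0:ℝ) < β - 1 := by linarith
  set ε : ℝ := 1 / (β - 1) with hεdef
  have hε : 0 < ε := by positivity
  set σ : ℝ := (2:ℝ) ^ (-1 / (β - 1)) with hσdef
  have hσε : σ = (2:ℝ) ^ (-ε) := by rw [hσdef, hεdef]; congr 1; ring
  have hσ0 : 0 < σ := Real.rpow_pos_of_pos two_pos _
  have hσ1 : σ < 1 := by
    rw [hσε]; exact Real.rpow_lt_one_of_one_lt_of_neg one_lt_two (by linarith)
  have h1σ : (0:ℝ) < 1 - σ := by linarith
  set γ : ℝ := β / (β - 1) with hγdef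
  have hγε : γ = 1 + ε := by rw [hγdef, hεdef]; field_simp; ring
  have hγ0 : 0 < γ := by rw [hγε]; linarith
  set box := Fintype.piFinset (fun _ : Fin d => Finset.range (m+1)) with hbox
  set P : Fin d → (Fin d → ℕ) → Prop :=
    fun i k => (k i : ℝ) + γ * (∑ j ∈ Finset.univ.erase i, (k j : ℝ)) ≤ m with hPdef
  have hΔbox : deltaFinset d m β ⊆ box := by
    intro k hk
    simp only [deltaFinset, Finset.mem_filter] at hk
    exact hk.1
  -- every element of the delta set satisfies P i for some i
  have exists_i : ∀ k ∈ deltaFinset d m β, ∃ i, P i k := by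
    intro k hk
    simp only [deltaFinset, Finset.mem_filter] at hk
    obtain ⟨j, hjm, hsum, hfloor⟩ := hk.2
    have hne : (Finset.univ : Finset (Fin d)).Nonempty := ⟨⟨0, hd⟩, Finset.mem_univ _⟩
    obtain ⟨i, -, hi⟩ := Finset.exists_mem_eq_sup Finset.univ hne k
    refine ⟨i, ?_⟩
    have hfl : ((m:ℤ) - (k i : ℤ)) ≤ ⌊β * (j:ℝ)⌋ := by
      rw [hi] at hfloor; omega
    have hβj : ((m:ℝ) - (k i : ℝ)) ≤ β * j := by
      have h := Int.le_floor.1 hfl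
      push_cast at h
      linarith
    have hsplit : (∑ l, (k l : ℝ)) = (k i : ℝ) + ∑ l ∈ Finset.univ.erase i, (k l : ℝ) :=
      (Finset.add_sum_erase _ (fun l => (k l : ℝ)) (Finset.mem_univ i)).symm
    have hsumr : (∑ l, (k l : ℝ)) + (j:ℝ) = m := by exact_mod_cast congrArg (Nat.cast : ℕ → ℝ) hsum
    set R : ℝ := ∑ l ∈ Finset.univ.erase i, (k l : ℝ) with hR
    have hjr : (j:ℝ) = (m:ℝ) - (k i : ℝ) - R := by rw [hsplit] at hsumr; linarith
    have hγβ : γ * (β - 1) = β := by rw [hγdef]; field_simp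
    have hβR : β * R ≤ ((m:ℝ) - k i) * (β - 1) := by
      rw [hjr] at hβj; nlinarith
    have h3 : γ * R * (β - 1) ≤ ((m:ℝ) - k i) * (β - 1) := by nlinarith
    have h4 : γ * R ≤ (m:ℝ) - k i := le_of_mul_le_mul_right h3 hβ1
    simp only [hPdef]
    linarith
  -- key per-coordinate bound
  have key : ∀ i : Fin d,
      ∑ k ∈ box.filter (P i), (2:ℝ) ^ (∑ j, k j)
        ≤ 2 ^ m * (2 * ((1 - σ)⁻¹) ^ (d - 1)) := by
    intro i
    set R : (Fin d → ℕ) → ℕ := fun k => ∑ j ∈ Finset.univ.erase i, k j with hRdef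
    set M : (Fin d → ℕ) → ℕ := fun k => (⌊(m:ℝ) - γ * R k⌋).toNat with hMdef
    set F : (Fin d → ℕ) → (Fin d → ℕ) := fun k => Function.update k i (M k - k i) with hFdef
    set w : (Fin d → ℕ) → ℝ := fun κ => ∏ j, (if j = i then (2:ℝ)⁻¹ else σ) ^ (κ j) with hwdef
    have hwnonneg : ∀ κ, 0 ≤ w κ := by
      intro κ; apply Finset.prod_nonneg; intro j _
      split_ifs <;> positivity
    have hmem : ∀ k ∈ box.filter (P i), k i ≤ M k ∧ (M k : ℝ) ≤ (m:ℝ) - γ * R k := by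
      intro k hk
      rw [Finset.mem_filter] at hk
      have hPk : (k i : ℝ) + γ * (∑ j ∈ Finset.univ.erase i, (k j : ℝ)) ≤ m := hk.2
      have hRcast : (∑ j ∈ Finset.univ.erase i, (k j : ℝ)) = (R k : ℝ) := by
        rw [hRdef]; push_cast; ring
      rw [hRcast] at hPk
      have hfl : (k i : ℝ) ≤ (m:ℝ) - γ * R k := by linarith
      have h0 : (0:ℝ) ≤ (m:ℝ) - γ * R k := le_trans (Nat.cast_nonneg _) hfl
      have hfl0 : (0:ℤ) ≤ ⌊(m:ℝ) - γ * R k⌋ := Int.floor_nonneg.2 h0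
      have hki : (k i : ℤ) ≤ ⌊(m:ℝ) - γ * R k⌋ := Int.le_floor.2 (by exact_mod_cast hfl)
      constructor
      · have h := Int.toNat_le_toNat hki
        simpa [hMdef] using h
      · have hcst : ((M k : ℕ) : ℝ) = ((⌊(m:ℝ) - γ * R k⌋ : ℤ) : ℝ) := by
          rw [hMdef]
          exact_mod_cast congrArg (Int.cast : ℤ → ℝ) (Int.toNat_of_nonneg hfl0)
        rw [hcst]
        exact Int.floor_le _
    -- term-wise bound
    have termb : ∀ k ∈ box.filter (P i), (2:ℝ) ^ (∑ j, k j) ≤ 2 ^ m * w (F k) := by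
      intro k hk
      obtain ⟨hkiM, hMle⟩ := hmem k hk
      have hFki : F k i = M k - k i := by rw [hFdef]; simp
      have hFkj : ∀ j, j ≠ i → F k j = k j := by
        intro j hj; rw [hFdef]; simp [Function.update_of_ne hj]
      have hwF : w (F k) = ((2:ℝ)⁻¹) ^ (M k - k i) * σ ^ (R k) := by
        simp only [hwdef]
        rw [← Finset.mul_prod_erase _ _ (Finset.mem_univ i)]
        simp only [if_pos rfl, hFki]
        congr 1
        rw [hRdef, ← Finset.prod_pow_eq_pow_sum]
        apply Finset.prod_congr rfl
        intro j hj
        have hji : j ≠ i := Finset.ne_of_mem_erase hj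
        rw [if_neg hji, hFkj j hji]
      rw [hwF]
      have e1 : (2:ℝ) ^ (∑ j, k j) = (2:ℝ) ^ (((k i : ℝ) + (R k : ℝ))) := by
        rw [← Real.rpow_natCast 2 (∑ j, k j)]
        congr 1
        rw [← Finset.add_sum_erase _ _ (Finset.mem_univ i), hRdef]
        push_cast; ring
      have e2 : ((2:ℝ)⁻¹) ^ (M k - k i) = (2:ℝ) ^ (-(((M k : ℝ)) - (k i : ℝ))) := by
        rw [inv_pow, ← Real.rpow_natCast 2 (M k - k i), ← Real.rpow_neg (by norm_num : (0:ℝ) ≤ 2)]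
        congr 1
        rw [Nat.cast_sub hkiM]
      have e3 : σ ^ (R k) = (2:ℝ) ^ (-ε * (R k : ℝ)) := by
        rw [hσε, ← Real.rpow_natCast ((2:ℝ) ^ (-ε)) (R k),
          ← Real.rpow_mul (by norm_num : (0:ℝ) ≤ 2)]
      have e4 : (2:ℝ) ^ m = (2:ℝ) ^ ((m:ℝ)) := by rw [Real.rpow_natCast]
      rw [e1, e2, e3, e4, ← Real.rpow_add two_pos, ← Real.rpow_add two_pos]
      apply Real.rpow_le_rpow_of_exponent_le one_le_two
      have hγR : γ * (R k : ℝ) = (R k : ℝ) + ε * (R k : ℝ) := by rw [hγε]; ring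
      nlinarith [hMle]
    -- injectivity of F on the filter
    have hinj : ∀ x ∈ box.filter (P i), ∀ y ∈ box.filter (P i), F x = F y → x = y := by
      intro x hx y hy hxy
      have hxj : ∀ j, j ≠ i → x j = y j := by
        intro j hj
        have h := congrFun hxy j
        simp only [hFdef] at h
        rwa [Function.update_of_ne hj, Function.update_of_ne hj] at h
      have hRxy : R x = R y := by
        rw [hRdef]
        exact Finset.sum_congr rfl fun j hj => hxj j (Finset.ne_of_mem_erase hj)
      have hMxy : M x = M y := by rw [hMdef]; simp [hRxy]
      have hii := congrFun hxy i
      rw [hFdef] at hii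
      simp only [Function.update_self] at hii
      rw [hMxy] at hii
      have hxM := (hmem x hx).1
      have hyM := (hmem y hy).1
      rw [hMxy] at hxM
      have hxyi : x i = y i := by omega
      funext j
      by_cases hj : j = i
      · subst hj; exact hxyi
      · exact hxj j hj
    have himg : (box.filter (P i)).image F ⊆ box := by
      intro κ hκ
      obtain ⟨k, hk, rfl⟩ := Finset.mem_image.1 hκ
      rw [hbox, Fintype.mem_piFinset]
      intro j
      rw [Finset.mem_range]
      by_cases hj : j = i
      · have h1 := (hmem k hk).2
        have hMm : M k ≤ m := by
          have hR0 : (0:ℝ) ≤ γ * R k := by positivity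
          have h2 : (M k : ℝ) ≤ (m:ℝ) := by linarith
          exact_mod_cast h2
        have hFi : F k j = M k - k j := by
          subst hj; simp only [hFdef]; rw [Function.update_self]
        omega
      · have hFj : F k j = k j := by rw [hFdef]; simp [Function.update_of_ne hj]
        have hkbox : k ∈ box := (Finset.mem_filter.1 hk).1
        rw [hbox, Fintype.mem_piFinset] at hkbox
        have h3 := hkbox j
        rw [Finset.mem_range] at h3
        omega
    calc ∑ k ∈ box.filter (P i), (2:ℝ) ^ (∑ j, k j)
        ≤ ∑ k ∈ box.filter (P i), 2 ^ m * w (F k) := Finset.sum_le_sum termb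
      _ = 2 ^ m * ∑ k ∈ box.filter (P i), w (F k) := by rw [Finset.mul_sum]
      _ = 2 ^ m * ∑ κ ∈ (box.filter (P i)).image F, w κ := by
          rw [Finset.sum_image hinj]
      _ ≤ 2 ^ m * ∑ κ ∈ box, w κ := by
          apply mul_le_mul_of_nonneg_left _ (by positivity)
          exact Finset.sum_le_sum_of_subset_of_nonneg himg (fun κ _ _ => hwnonneg κ)
      _ = 2 ^ m * ∏ j, ∑ a ∈ Finset.range (m+1), (if j = i then (2:ℝ)⁻¹ else σ) ^ a := by
          simp only [hwdef, hbox]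
          rw [← Finset.prod_univ_sum]
      _ ≤ 2 ^ m * (2 * ((1 - σ)⁻¹) ^ (d - 1)) := by
          apply mul_le_mul_of_nonneg_left _ (by positivity)
          rw [← Finset.mul_prod_erase _ _ (Finset.mem_univ i)]
          simp only [if_pos rfl]
          have hgi : ∑ a ∈ Finset.range (m+1), ((2:ℝ)⁻¹) ^ a ≤ 2 := by
            have h := geo_le (by norm_num : (0:ℝ) ≤ 2⁻¹) (by norm_num : (2:ℝ)⁻¹ < 1) (m+1)
            have h2 : ((1:ℝ) - 2⁻¹)⁻¹ = 2 := by norm_num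
            rw [h2] at h
            exact h
          have hprodle : ∏ j ∈ Finset.univ.erase i,
              (∑ a ∈ Finset.range (m+1), (if j = i then (2:ℝ)⁻¹ else σ) ^ a)
                ≤ ((1 - σ)⁻¹) ^ (d - 1) := by
            have hb : ∀ j ∈ Finset.univ.erase i,
                (∑ a ∈ Finset.range (m+1), (if j = i then (2:ℝ)⁻¹ else σ) ^ a) ≤ (1 - σ)⁻¹ := by
              intro j hj
              rw [if_neg (Finset.ne_of_mem_erase hj)]
              exact geo_le hσ0.le hσ1 (m+1)
            calc ∏ j ∈ Finset.univ.erase i,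
                (∑ a ∈ Finset.range (m+1), (if j = i then (2:ℝ)⁻¹ else σ) ^ a)
                  ≤ ∏ _j ∈ Finset.univ.erase i, (1 - σ)⁻¹ := by
                    apply Finset.prod_le_prod _ hb
                    intro j _
                    apply Finset.sum_nonneg
                    intro a _
                    split_ifs <;> positivity
              _ = ((1 - σ)⁻¹) ^ (d - 1) := by
                  rw [Finset.prod_const, Finset.card_erase_of_mem (Finset.mem_univ i),
                    Finset.card_univ, Fintype.card_fin]
          exact mul_le_mul hgi hprodle
            (Finset.prod_nonneg fun j _ => Finset.sum_nonneg fun a _ => by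
              split_ifs <;> positivity) (by norm_num)
  -- first assertion
  have main : (∑ k ∈ deltaFinset d m β, (2:ℝ) ^ (∑ i, k i))
      ≤ γ * d * ((1 - σ) ^ d)⁻¹ * 2 ^ m := by
    have stepA : (∑ k ∈ deltaFinset d m β, (2:ℝ) ^ (∑ i, k i))
        ≤ ∑ i : Fin d, ∑ k ∈ box.filter (P i), (2:ℝ) ^ (∑ j, k j) := by
      calc ∑ k ∈ deltaFinset d m β, (2:ℝ) ^ (∑ j, k j)
          ≤ ∑ k ∈ deltaFinset d m β, ∑ i : Fin d,
              (if P i k then (2:ℝ) ^ (∑ j, k j) else 0) := by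
            apply Finset.sum_le_sum
            intro k hk
            obtain ⟨i, hi⟩ := exists_i k hk
            have h := Finset.single_le_sum
              (f := fun i => if P i k then (2:ℝ) ^ (∑ j, k j) else 0)
              (fun j _ => by split_ifs <;> positivity) (Finset.mem_univ i)
            rwa [if_pos hi] at h
        _ = ∑ i : Fin d, ∑ k ∈ deltaFinset d m β,
              (if P i k then (2:ℝ) ^ (∑ j, k j) else 0) := Finset.sum_comm
        _ = ∑ i : Fin d, ∑ k ∈ (deltaFinset d m β).filter (P i), (2:ℝ) ^ (∑ j, k j) :=
            Finset.sum_congr rfl fun i _ => (Finset.sum_filter _ _).symm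
        _ ≤ ∑ i : Fin d, ∑ k ∈ box.filter (P i), (2:ℝ) ^ (∑ j, k j) := by
            apply Finset.sum_le_sum
            intro i _
            exact Finset.sum_le_sum_of_subset_of_nonneg
              (Finset.filter_subset_filter _ hΔbox) (fun _ _ _ => by positivity)
    have stepB : (∑ k ∈ deltaFinset d m β, (2:ℝ) ^ (∑ i, k i))
        ≤ (d:ℝ) * (2 ^ m * (2 * ((1 - σ)⁻¹) ^ (d - 1))) := by
      calc (∑ k ∈ deltaFinset d m β, (2:ℝ) ^ (∑ i, k i))
          ≤ ∑ i : Fin d, ∑ k ∈ box.filter (P i), (2:ℝ) ^ (∑ j, k j) := stepA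
        _ ≤ ∑ _i : Fin d, (2:ℝ) ^ m * (2 * ((1 - σ)⁻¹) ^ (d - 1)) :=
            Finset.sum_le_sum fun i _ => key i
        _ = (d:ℝ) * (2 ^ m * (2 * ((1 - σ)⁻¹) ^ (d - 1))) := by
            rw [Finset.sum_const, Finset.card_univ, Fintype.card_fin, nsmul_eq_mul]
    have h2σγ : 2 * (1 - σ) ≤ γ := by
      have h2σ : (2:ℝ) ^ ((1:ℝ) - ε) = 2 * σ := by
        rw [hσε, sub_eq_add_neg, Real.rpow_add two_pos, Real.rpow_one]
      rcases le_or_gt 1 ε with h | h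
      · have hp : (0:ℝ) < 2 * σ := by positivity
        rw [hγε]; linarith
      · have h2 : (2:ℝ) ^ (0:ℝ) ≤ (2:ℝ) ^ ((1:ℝ) - ε) :=
          Real.rpow_le_rpow_of_exponent_le one_le_two (by linarith)
        rw [Real.rpow_zero, h2σ] at h2
        rw [hγε]; linarith
    have epow : ((1 - σ)⁻¹) ^ (d - 1) = ((1 - σ) ^ d)⁻¹ * (1 - σ) := by
      have hne : (1 - σ) ≠ 0 := ne_of_gt h1σ
      have key2 : (1 - σ) ^ d = (1 - σ) ^ (d - 1) * (1 - σ) := by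
        conv_lhs => rw [show d = d - 1 + 1 from (Nat.succ_pred_eq_of_pos hd).symm]
        rw [pow_succ]
      rw [inv_pow, key2, mul_inv, mul_assoc, inv_mul_cancel₀ hne, mul_one]
    calc (∑ k ∈ deltaFinset d m β, (2:ℝ) ^ (∑ i, k i))
        ≤ (d:ℝ) * (2 ^ m * (2 * ((1 - σ)⁻¹) ^ (d - 1))) := stepB
      _ = (2 * (1 - σ)) * ((d:ℝ) * ((1 - σ) ^ d)⁻¹ * 2 ^ m) := by rw [epow]; ring
      _ ≤ γ * ((d:ℝ) * ((1 - σ) ^ d)⁻¹ * 2 ^ m) :=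
          mul_le_mul_of_nonneg_right h2σγ (by positivity)
      _ = γ * d * ((1 - σ) ^ d)⁻¹ * 2 ^ m := by ring
  refine ⟨main, ?_⟩
  -- second assertion
  set T : Finset (Fin d → ℝ) := (deltaFinset d m β).biUnion
    (fun k => (Fintype.piFinset fun i => Finset.range (2 ^ (k i + 1))).image
      (fun s => fun i : Fin d => (s i : ℝ) / 2 ^ (k i))) with hT
  have hGsub : {x : Fin d → ℝ | ∃ k ∈ deltaFinset d m β, ∃ s : Fin d → ℕ,
      (∀ i, s i < 2 ^ (k i + 1)) ∧ x = fun i => (s i : ℝ) / 2 ^ (k i)} ⊆ ↑T := by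
    rintro x ⟨k, hk, s, hs, rfl⟩
    rw [Finset.mem_coe, hT, Finset.mem_biUnion]
    refine ⟨k, hk, ?_⟩
    rw [Finset.mem_image]
    refine ⟨s, ?_, rfl⟩
    rw [Fintype.mem_piFinset]
    intro i
    rw [Finset.mem_range]
    exact hs i
  have h1 : ({x : Fin d → ℝ | ∃ k ∈ deltaFinset d m β, ∃ s : Fin d → ℕ,
      (∀ i, s i < 2 ^ (k i + 1)) ∧ x = fun i => (s i : ℝ) / 2 ^ (k i)}.ncard : ℝ)
        ≤ (T.card : ℝ) := by
    have h := Set.ncard_le_ncard hGsub T.finite_toSet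
    rw [Set.ncard_coe_finset] at h
    exact_mod_cast h
  have h2 : (T.card : ℝ) ≤ 2 ^ d * ∑ k ∈ deltaFinset d m β, (2:ℝ) ^ (∑ i, k i) := by
    have hc : T.card ≤ ∑ k ∈ deltaFinset d m β,
        ((Fintype.piFinset fun i => Finset.range (2 ^ (k i + 1))).image
          (fun s => fun i : Fin d => (s i : ℝ) / 2 ^ (k i))).card := Finset.card_biUnion_le
    have hc2 : ∀ k : Fin d → ℕ,
        ((Fintype.piFinset fun i => Finset.range (2 ^ (k i + 1))).image
          (fun s => fun i : Fin d => (s i : ℝ) / 2 ^ (k i))).card ≤ 2 ^ (d + ∑ i, k i) := by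
      intro k
      calc ((Fintype.piFinset fun i => Finset.range (2 ^ (k i + 1))).image
          (fun s => fun i : Fin d => (s i : ℝ) / 2 ^ (k i))).card
          ≤ (Fintype.piFinset fun i => Finset.range (2 ^ (k i + 1))).card :=
            Finset.card_image_le
        _ = ∏ i, 2 ^ (k i + 1) := by simp [Fintype.card_piFinset]
        _ = 2 ^ (∑ i, (k i + 1)) := Finset.prod_pow_eq_pow_sum _ _ _
        _ = 2 ^ (d + ∑ i, k i) := by
            congr 1
            rw [Finset.sum_add_distrib, Finset.sum_const, Finset.card_univ, Fintype.card_fin,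
              smul_eq_mul, mul_one]
            exact Nat.add_comm _ _
    calc (T.card : ℝ) ≤ ((∑ k ∈ deltaFinset d m β, 2 ^ (d + ∑ i, k i) : ℕ) : ℝ) := by
          exact_mod_cast le_trans hc (Finset.sum_le_sum fun k _ => hc2 k)
      _ = 2 ^ d * ∑ k ∈ deltaFinset d m β, (2:ℝ) ^ (∑ i, k i) := by
          push_cast
          rw [Finset.mul_sum]
          exact Finset.sum_congr rfl fun k _ => by rw [pow_add]
  calc ({x : Fin d → ℝ | ∃ k ∈ deltaFinset d m β, ∃ s : Fin d → ℕ,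
      (∀ i, s i < 2 ^ (k i + 1)) ∧ x = fun i => (s i : ℝ) / 2 ^ (k i)}.ncard : ℝ)
      ≤ (T.card : ℝ) := h1
    _ ≤ 2 ^ d * ∑ k ∈ deltaFinset d m β, (2:ℝ) ^ (∑ i, k i) := h2
    _ ≤ 2 ^ d * (γ * d * ((1 - σ) ^ d)⁻¹ * 2 ^ m) :=
        mul_le_mul_of_nonneg_left main (by positivity)
    _ = γ * d * 2 ^ d * ((1 - σ) ^ d)⁻¹ * 2 ^ m := by ring
end

section
/- Let d ∈ ℕ, ℓ ∈ ℕ₀ and 1 ≤ p ≤ ∞. Then Σ_{k∈ℕ₀^d, |k|_1=ℓ} |2^k|_p ≤ d · 2^{ℓ+d−1}, where |2^k|_p = (Σ_{i=1}^d 2^{p k_i})^{1/p} for p < ∞ and max_i 2^{k_i} for p = ∞. -/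
open MeasureTheory Finset
open scoped ENNReal NNReal

section Aux

open Finset.Nat

private lemma sum_AT_succ {M : Type*} [AddCommMonoid M] (d n : ℕ) (f : (Fin (d+1) → ℕ) → M) :
    ∑ k ∈ antidiagonalTuple (d+1) n, f k
      = ∑ j ∈ Finset.range (n+1), ∑ t ∈ antidiagonalTuple d (n - j), f (Fin.cons j t) := by
  rw [show (∑ j ∈ Finset.range (n+1), ∑ t ∈ antidiagonalTuple d (n - j), f (Fin.cons j t))
      = ∑ x ∈ (Finset.range (n+1)).sigma (fun j => antidiagonalTuple d (n - j)),
          f (Fin.cons x.1 x.2) from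
    Finset.sum_sigma (Finset.range (n+1)) (fun j => antidiagonalTuple d (n - j))
      (fun x => f (Fin.cons x.1 x.2)) |>.symm]
  refine Finset.sum_nbij' (i := fun k => (⟨k 0, Fin.tail k⟩ : Σ _j : ℕ, Fin d → ℕ))
    (j := fun x => Fin.cons x.1 x.2) ?_ ?_ ?_ ?_ ?_
  · intro k hk
    rw [mem_antidiagonalTuple] at hk
    have hsum : k 0 + ∑ i, Fin.tail k i = n := by
      rw [← hk, Fin.sum_univ_succ]; rfl
    simp only [Finset.mem_sigma, Finset.mem_range, mem_antidiagonalTuple]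
    omega
  · intro x hx
    simp only [Finset.mem_sigma, Finset.mem_range, mem_antidiagonalTuple] at hx
    rw [mem_antidiagonalTuple, Fin.sum_cons, hx.2]
    omega
  · intro k hk
    exact Fin.cons_self_tail k
  · intro x hx
    ext
    · simp
    · simp [Fin.tail_cons]
  · intro k hk
    rw [Fin.cons_self_tail]

private lemma card_AT (d n : ℕ) :
    (antidiagonalTuple (d+1) n).card = Nat.choose (n + d) d := by
  induction d generalizing n with
  | zero => simp [antidiagonalTuple_one]
  | succ d ih =>
    have h : (antidiagonalTuple (d+1+1) n).card
        = ∑ j ∈ Finset.range (n+1), (antidiagonalTuple (d+1) (n - j)).card := by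
      rw [Finset.card_eq_sum_ones, sum_AT_succ]
      exact Finset.sum_congr rfl fun j _ => (Finset.card_eq_sum_ones _).symm
    rw [h]
    have h2 : ∀ j ∈ Finset.range (n+1),
        (antidiagonalTuple (d+1) (n - j)).card = Nat.choose (n - j + d) d :=
      fun j _ => ih (n - j)
    rw [Finset.sum_congr rfl h2]
    -- reflect
    have h3 : ∑ j ∈ Finset.range (n+1), Nat.choose (n - j + d) d
        = ∑ m ∈ Finset.range (n+1), Nat.choose (m + d) d := by
      rw [← Finset.sum_range_reflect (fun m => Nat.choose (m + d) d) (n+1)]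
      refine Finset.sum_congr rfl fun j hj => ?_
      rw [Finset.mem_range] at hj
      have e1 : n + 1 - 1 - j = n - j := by omega
      rw [e1]
    rw [h3]
    -- hockey stick
    clear h h2 h3
    induction n with
    | zero => simp
    | succ n ihn =>
      rw [Finset.sum_range_succ, ihn]
      have e1 : n + (d + 1) = n + d + 1 := by omega
      have e2 : n + 1 + (d + 1) = n + d + 1 + 1 := by omega
      have e3 : n + 1 + d = n + d + 1 := by omega
      rw [e1, e2, e3, Nat.choose_succ_succ (n + d + 1) d]
      simp only [Nat.succ_eq_add_one]
      omega

private lemma pascalSum (n d : ℕ) :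
    ∑ i ∈ Finset.range (d+1), Nat.choose (n+1) i + Nat.choose n d
      = 2 * ∑ i ∈ Finset.range (d+1), Nat.choose n i := by
  induction d with
  | zero => simp
  | succ d ih =>
    rw [Finset.sum_range_succ, Finset.sum_range_succ (f := Nat.choose n),
      Nat.choose_succ_succ (n := n)]
    simp only [Nat.succ_eq_add_one] at *
    omega

private lemma keyEq (d n : ℕ) :
    ∑ m ∈ Finset.range (n+1), Nat.choose (m + d) d * 2 ^ (n - m)
      + ∑ i ∈ Finset.range (d+1), Nat.choose (n + d + 1) i = 2 ^ (n + d + 1) := by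
  induction n with
  | zero =>
    have h1 : ∑ i ∈ Finset.range (d+2), Nat.choose (d+1) i = 2 ^ (d+1) :=
      Nat.sum_range_choose (d+1)
    rw [Finset.sum_range_succ, Nat.choose_self] at h1
    simp only [Finset.sum_range_one, Nat.zero_add, Nat.choose_self, Nat.sub_zero, pow_zero,
      mul_one]
    omega
  | succ n ih =>
    have hS : ∑ m ∈ Finset.range (n+2), Nat.choose (m + d) d * 2 ^ (n + 1 - m)
        = 2 * (∑ m ∈ Finset.range (n+1), Nat.choose (m + d) d * 2 ^ (n - m))
          + Nat.choose (n + d + 1) d := by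
      rw [Finset.sum_range_succ, Nat.sub_self, pow_zero, mul_one, Finset.mul_sum]
      have e : n + 1 + d = n + d + 1 := by omega
      rw [e]
      congr 1
      refine Finset.sum_congr rfl fun m hm => ?_
      rw [Finset.mem_range] at hm
      have : n + 1 - m = (n - m) + 1 := by omega
      rw [this, pow_succ]
      ring
    have hP := pascalSum (n + d + 1) d
    have hpow : (2:ℕ) ^ (n + 1 + d + 1) = 2 * 2 ^ (n + d + 1) := by
      rw [← pow_succ']
      congr 1
      omega
    have hre : n + d + 1 + 1 = n + 1 + d + 1 := by omega
    rw [hre] at hP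
    rw [hS, hpow]
    omega

private lemma key (d n : ℕ) :
    ∑ m ∈ Finset.range (n+1), Nat.choose (m + d) d * 2 ^ (n - m) ≤ 2 ^ (n + d + 1) := by
  have := keyEq d n
  omega

private lemma geo (N d : ℕ) : ∑ m ∈ Finset.range N, 2 ^ (m + d) ≤ 2 ^ (N + d) := by
  induction N with
  | zero => positivity
  | succ N ih =>
    rw [Finset.sum_range_succ]
    have : (2:ℕ) ^ (N + 1 + d) = 2 ^ (N + d) + 2 ^ (N + d) := by
      have : N + 1 + d = (N + d) + 1 := by omega
      rw [this, pow_succ]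
      omega
    omega

private lemma Tbound (d n : ℕ) :
    ∑ k ∈ antidiagonalTuple (d+1) n, ∑ i, 2 ^ (k i) ≤ (d+1) * 2 ^ (n + d) := by
  induction d generalizing n with
  | zero => simp [antidiagonalTuple_one]
  | succ d ih =>
    rw [sum_AT_succ]
    have hins : ∀ j ∈ Finset.range (n+1),
        ∑ t ∈ antidiagonalTuple (d+1) (n - j), ∑ i, 2 ^ (Fin.cons j t i)
          = Nat.choose (n - j + d) d * 2 ^ j
            + ∑ t ∈ antidiagonalTuple (d+1) (n - j), ∑ i, 2 ^ (t i) := by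
      intro j _
      have : ∀ t : Fin (d+1) → ℕ, ∑ i, 2 ^ (Fin.cons j t i) = 2 ^ j + ∑ i, 2 ^ (t i) := by
        intro t
        simp [Fin.sum_univ_succ, Fin.cons_succ]
      rw [Finset.sum_congr rfl fun t _ => this t, Finset.sum_add_distrib, Finset.sum_const,
        smul_eq_mul, card_AT]
    rw [Finset.sum_congr rfl hins, Finset.sum_add_distrib]
    clear hins
    have E1 : ∀ j, j < n + 1 → n + 1 - 1 - j = n - j := fun j hj => by omega
    have E2 : ∀ j, j < n + 1 → n - (n - j) = j := fun j hj => by omega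
    have hgoal : 2 ^ (n + d + 1) + (d+1) * 2 ^ (n + 1 + d) = (d + 1 + 1) * 2 ^ (n + (d + 1)) := by
      have e1 : n + (d + 1) = n + d + 1 := by omega
      have e2 : n + 1 + d = n + d + 1 := by omega
      rw [e1, e2]
      ring
    have h2 : ∑ j ∈ Finset.range (n+1),
        (∑ t ∈ antidiagonalTuple (d+1) (n - j), ∑ i, 2 ^ (t i))
        ≤ (d+1) * 2 ^ (n + 1 + d) := by
      calc ∑ j ∈ Finset.range (n+1), (∑ t ∈ antidiagonalTuple (d+1) (n - j), ∑ i, 2 ^ (t i))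
          ≤ ∑ j ∈ Finset.range (n+1), (d+1) * 2 ^ (n - j + d) :=
            Finset.sum_le_sum fun j _ => ih (n - j)
        _ = (d+1) * ∑ j ∈ Finset.range (n+1), 2 ^ (n - j + d) := by rw [Finset.mul_sum]
        _ = (d+1) * ∑ m ∈ Finset.range (n+1), 2 ^ (m + d) := by
            congr 1
            rw [← Finset.sum_range_reflect (fun m => 2 ^ (m + d)) (n+1)]
            refine Finset.sum_congr rfl fun j hj => ?_
            rw [Finset.mem_range] at hj
            rw [E1 j hj]
        _ ≤ (d+1) * 2 ^ (n + 1 + d) := Nat.mul_le_mul_left _ (geo (n+1) d)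
    have h1 : ∑ j ∈ Finset.range (n+1), Nat.choose (n - j + d) d * 2 ^ j
        ≤ 2 ^ (n + d + 1) := by
      have : ∑ j ∈ Finset.range (n+1), Nat.choose (n - j + d) d * 2 ^ j
          = ∑ m ∈ Finset.range (n+1), Nat.choose (m + d) d * 2 ^ (n - m) := by
        rw [← Finset.sum_range_reflect (fun m => Nat.choose (m + d) d * 2 ^ (n - m)) (n+1)]
        refine Finset.sum_congr rfl fun j hj => ?_
        rw [Finset.mem_range] at hj
        rw [E1 j hj, E2 j hj]
      rw [this]
      exact key d n
    exact le_trans (Nat.add_le_add h1 h2) hgoal.le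

private lemma pNorm2k_le (d : ℕ) (hd : 0 < d) (p : ℝ≥0∞) (hp : 1 ≤ p) (k : Fin d → ℕ) :
    pNorm2k d p k ≤ ∑ i, (2:ℝ) ^ (k i) := by
  have : Nonempty (Fin d) := ⟨⟨0, hd⟩⟩
  by_cases hptop : p = ⊤
  · unfold pNorm2k
    rw [if_pos hptop]
    obtain ⟨i, -, hi⟩ := Finset.exists_mem_eq_sup Finset.univ Finset.univ_nonempty k
    rw [hi]
    exact Finset.single_le_sum (f := fun j : Fin d => (2:ℝ) ^ (k j))
      (fun j _ => by positivity) (Finset.mem_univ i)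
  · unfold pNorm2k
    rw [if_neg hptop]
    set q := p.toReal with hqdef
    have hq : 1 ≤ q := by
      have := ENNReal.toReal_mono hptop hp
      simpa using this
    have hq0 : 0 < q := by linarith
    set S : ℝ := ∑ i, (2:ℝ) ^ (k i) with hSdef
    have hterm_pos : ∀ i : Fin d, (0:ℝ) < 2 ^ (k i) := fun i => by positivity
    have hS_pos : 0 < S := Finset.sum_pos (fun i _ => hterm_pos i) Finset.univ_nonempty
    have hle : ∀ i : Fin d, (2:ℝ) ^ (k i) ≤ S :=
      fun i => Finset.single_le_sum (fun j _ => (hterm_pos j).le) (Finset.mem_univ i)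
    have hterm : ∀ i : Fin d, (2:ℝ) ^ (q * (k i : ℝ)) = ((2:ℝ) ^ (k i)) ^ q := by
      intro i
      rw [mul_comm, Real.rpow_mul (by norm_num), Real.rpow_natCast]
    have hsum_le : ∑ i, (2:ℝ) ^ (q * (k i : ℝ)) ≤ S ^ q := by
      have step : ∀ i : Fin d, ((2:ℝ) ^ (k i)) ^ q ≤ (2:ℝ) ^ (k i) * S ^ (q - 1) := by
        intro i
        have h1 : ((2:ℝ) ^ (k i)) ^ q = (2:ℝ) ^ (k i) * ((2:ℝ) ^ (k i)) ^ (q - 1) := by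
          have hx : ((2:ℝ) ^ (k i)) ^ (1 + (q - 1)) = (2:ℝ) ^ (k i) * ((2:ℝ) ^ (k i)) ^ (q - 1) := by
            rw [Real.rpow_add (hterm_pos i), Real.rpow_one]
          rw [show 1 + (q - 1) = q by ring] at hx
          exact hx
        rw [h1]
        refine mul_le_mul_of_nonneg_left ?_ (hterm_pos i).le
        exact Real.rpow_le_rpow (hterm_pos i).le (hle i) (by linarith)
      calc ∑ i, (2:ℝ) ^ (q * (k i : ℝ)) = ∑ i, ((2:ℝ) ^ (k i)) ^ q := by
            exact Finset.sum_congr rfl fun i _ => hterm i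
        _ ≤ ∑ i, (2:ℝ) ^ (k i) * S ^ (q - 1) := Finset.sum_le_sum fun i _ => step i
        _ = S * S ^ (q - 1) := by rw [← Finset.sum_mul]
        _ = S ^ q := by
            have hx : S ^ (1 + (q - 1)) = S * S ^ (q - 1) := by
              rw [Real.rpow_add hS_pos, Real.rpow_one]
            rw [show 1 + (q - 1) = q by ring] at hx
            exact hx.symm
    calc (∑ i, (2:ℝ) ^ (q * (k i : ℝ))) ^ (1 / q)
        ≤ (S ^ q) ^ (1 / q) :=
          Real.rpow_le_rpow (Finset.sum_nonneg fun i _ => by positivity) hsum_le (by positivity)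
      _ = S := by
          rw [← Real.rpow_mul hS_pos.le, mul_one_div, div_self hq0.ne', Real.rpow_one]

end Aux

/-- Lemma A.3 of the paper: `Σ_{|k|_1 = ℓ} |2^k|_p ≤ d 2^{ℓ+d-1}`. -/
theorem sum_pnorm_bound (d : ℕ) (hd : 0 < d) (ℓ : ℕ) (p : ℝ≥0∞) (hp : 1 ≤ p) :
    ∑ k ∈ (Fintype.piFinset fun _ : Fin d => Finset.range (ℓ + 1)).filter
        (fun k => ∑ i, k i = ℓ), pNorm2k d p k
      ≤ (d : ℝ) * 2 ^ (ℓ + d - 1) := by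
  classical
  obtain ⟨e, rfl⟩ : ∃ e, d = e + 1 := ⟨d - 1, by omega⟩
  have hset : (Fintype.piFinset fun _ : Fin (e+1) => Finset.range (ℓ + 1)).filter
      (fun k => ∑ i, k i = ℓ) = Finset.Nat.antidiagonalTuple (e+1) ℓ := by
    ext k
    simp only [Finset.mem_filter, Fintype.mem_piFinset, Finset.mem_range,
      Finset.Nat.mem_antidiagonalTuple]
    constructor
    · exact fun h => h.2
    · intro h
      refine ⟨fun i => ?_, h⟩
      have : k i ≤ ∑ j, k j := Finset.single_le_sum (fun j _ => Nat.zero_le _) (Finset.mem_univ i)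
      omega
  rw [hset]
  have h1 : ∑ k ∈ Finset.Nat.antidiagonalTuple (e+1) ℓ, pNorm2k (e+1) p k
      ≤ ∑ k ∈ Finset.Nat.antidiagonalTuple (e+1) ℓ, ∑ i, (2:ℝ) ^ (k i) :=
    Finset.sum_le_sum fun k _ => pNorm2k_le (e+1) hd p hp k
  refine h1.trans ?_
  have h2 : ∑ k ∈ Finset.Nat.antidiagonalTuple (e+1) ℓ, ∑ i, (2:ℝ) ^ (k i)
      = ((∑ k ∈ Finset.Nat.antidiagonalTuple (e+1) ℓ, ∑ i, 2 ^ (k i) : ℕ) : ℝ) := by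
    push_cast
    rfl
  rw [h2]
  calc ((∑ k ∈ Finset.Nat.antidiagonalTuple (e+1) ℓ, ∑ i, 2 ^ (k i) : ℕ) : ℝ)
      ≤ (((e+1) * 2 ^ (ℓ + e) : ℕ) : ℝ) := by exact_mod_cast Tbound e ℓ
    _ = ((e+1 : ℕ) : ℝ) * 2 ^ (ℓ + (e+1) - 1) := by
        have h5 : ℓ + (e + 1) - 1 = ℓ + e := by omega
        rw [h5]
        push_cast
        ring
end

section
/- Let 1 < α ≤ 2 and 1 ≤ p ≤ ∞ satisfy 2^{1/α} − (p+1)^{−1/(pα)}/2 > 1, and let β satisfy (α + log₂(1−(p+1)^{−1/(pα)}·2^{−1−1/α})) / (1 + log₂(1−(p+1)^{−1/(pα)}·2^{−1−1/α})) < β < 1 − 1/log₂(1−(p+1)^{−1/(pα)}·2^{−1−1/α}). Then (1 − 2^{−1/(β−1)})^{α−1} · (p+1)^{1/p} · 2^{α+1} · (1 − 2^{−(β−α)/(β−1)}) > 1; consequently, for B(d) = (1−2^{−1/(β−1)}) · ((p+1)^{1/p} 2^{α+1} (1−2^{−(β−α)/(β−1)}) / d^{2α/d})^{1/(α−1)}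 there exist d₀(α,β,p) ∈ ℕ and B₀(α,β,p) > 1 such that B(d) ≥ B₀(α,β,p) > 1 for all d ≥ d₀(α,β,p). -/
open MeasureTheory Finset
open scoped ENNReal NNReal

/-- under the stated conditions on `α, p, β` the quantity
`(1-2^{-1/(β-1)})^{α-1} (p+1)^{1/p} 2^{α+1} (1-2^{-(β-α)/(β-1)})` exceeds `1`, and
consequently `B(d) ≥ B₀ > 1` for all large `d`. -/
theorem B_gt_one (α β : ℝ) (p : ℝ≥0∞) (hα1 : 1 < α) (hα2 : α ≤ 2) (hp : 1 ≤ p)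
    (h1 : 1 < (2:ℝ) ^ (1 / α) - pFactor p (-(1 / α)) / 2)
    (h2 : (α + Real.logb 2 (1 - pFactor p (-(1 / α)) * (2:ℝ) ^ (-1 - 1 / α))) /
        (1 + Real.logb 2 (1 - pFactor p (-(1 / α)) * (2:ℝ) ^ (-1 - 1 / α))) < β)
    (h3 : β < 1 - 1 / Real.logb 2 (1 - pFactor p (-(1 / α)) * (2:ℝ) ^ (-1 - 1 / α))) :
    1 < (1 - (2:ℝ) ^ (-1 / (β - 1))) ^ (α - 1) *
        (pFactor p 1 * (2:ℝ) ^ (α + 1) * (1 - (2:ℝ) ^ (-(β - α) / (β - 1)))) ∧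
    ∃ d₀ : ℕ, ∃ B₀ : ℝ, 1 < B₀ ∧ ∀ d : ℕ, d₀ ≤ d → B₀ ≤ Bconst d α β p := by
  classical
  have hα0 : (0:ℝ) < α := by linarith
  have h2pos : (0:ℝ) < 2 := two_pos
  set t := pFactor p (-(1/α)) with ht_def
  set P := pFactor p 1 with hP_def
  have ht_pos : 0 < t := by
    rw [ht_def, pFactor]
    split_ifs with h
    · norm_num
    · exact Real.rpow_pos_of_pos (by positivity) _
  have hP_pos : 0 < P := by
    rw [hP_def, pFactor]
    split_ifs with h
    · norm_num
    · exact Real.rpow_pos_of_pos (by positivity) _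
  have hkey : t ^ α * P = 1 := by
    rw [ht_def, hP_def, pFactor, pFactor]
    split_ifs with h
    · simp
    · have hb : (0:ℝ) < p.toReal + 1 := by positivity
      have hq : p.toReal ≠ 0 := by
        have h1p : (1:ℝ≥0∞).toReal ≤ p.toReal := ENNReal.toReal_mono h hp
        simp at h1p; linarith
      rw [← Real.rpow_mul hb.le, ← Real.rpow_add hb]
      rw [show -(1/α) / p.toReal * α + 1 / p.toReal = 0 by
        field_simp; ring]
      exact Real.rpow_zero _
  set m := t * (2:ℝ) ^ (-1 - 1/α) with hm_def
  have hm_pos : 0 < m := mul_pos ht_pos (Real.rpow_pos_of_pos h2pos _)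
  have hv_pos : (0:ℝ) < (2:ℝ) ^ (-(1/α)) := Real.rpow_pos_of_pos h2pos _
  have huv : (2:ℝ) ^ (1/α) * (2:ℝ) ^ (-(1/α)) = 1 := by
    rw [← Real.rpow_add h2pos]; norm_num
  have hmeq : m = t / 2 * (2:ℝ) ^ (-(1/α)) := by
    rw [hm_def, show (-1 - 1/α) = (-1) + (-(1/α)) by ring, Real.rpow_add h2pos,
      Real.rpow_neg_one]
    ring
  have hm_lt : m < 1 - (2:ℝ) ^ (-(1/α)) := by
    have hu : (0:ℝ) < (2:ℝ)^(1/α) - 1 - t/2 := by linarith [h1]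
    nlinarith [mul_pos hu hv_pos]
  have hc_pos : 0 < 1 - m := by linarith
  have hc_lt1 : 1 - m < 1 := by linarith
  set L := Real.logb 2 (1 - m) with hL_def
  have hL_neg : L < 0 := Real.logb_neg one_lt_two hc_pos hc_lt1
  have hL_gt : -(1/α) < L := by
    rw [hL_def]
    have hlr : Real.logb 2 ((2:ℝ)^(-(1/α))) = -(1/α) := Real.logb_rpow (by norm_num) (by norm_num)
    calc -(1/α) = Real.logb 2 ((2:ℝ)^(-(1/α))) := hlr.symm
    _ < Real.logb 2 (1 - m) := Real.logb_lt_logb one_lt_two hv_pos (by linarith)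
  have h1L : 0 < 1 + L := by
    have : 1/α < 1 := by rw [div_lt_one hα0]; exact hα1
    linarith
  have hβ1 : 1 < β := by
    have hfrac : 1 < (α + L)/(1 + L) := by
      rw [lt_div_iff₀ h1L]; linarith
    linarith [h2]
  have hβ1' : (0:ℝ) < β - 1 := by linarith
  have hL_ne : L ≠ 0 := ne_of_lt hL_neg
  have hstep3 : -1 < L * (β - 1) := by
    have h3' : β - 1 < -(1/L) := by linarith [h3]
    have hLinv : L * -(1/L) = -1 := by field_simp
    nlinarith [mul_lt_mul_of_neg_left h3' hL_neg]
  have hexp1 : -1/(β-1) < L := by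
    rw [div_lt_iff₀ hβ1']; linarith
  have hstep2 : α - β < L * (β - 1) := by
    have h2' : α + L < β * (1 + L) := by
      rw [div_lt_iff₀ h1L] at h2; exact h2
    nlinarith
  have hexp2 : -(β-α)/(β-1) < L := by
    rw [div_lt_iff₀ hβ1']; linarith
  have h2L : (2:ℝ) ^ L = 1 - m := by
    rw [hL_def]; exact Real.rpow_logb h2pos (by norm_num) hc_pos
  have hA_gt : m < 1 - (2:ℝ)^(-1/(β-1)) := by
    have h' : (2:ℝ)^(-1/(β-1)) < (2:ℝ)^L := (Real.rpow_lt_rpow_left_iff one_lt_two).mpr hexp1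
    rw [h2L] at h'; linarith
  have hD_gt : m < 1 - (2:ℝ)^(-(β-α)/(β-1)) := by
    have h' : (2:ℝ)^(-(β-α)/(β-1)) < (2:ℝ)^L := (Real.rpow_lt_rpow_left_iff one_lt_two).mpr hexp2
    rw [h2L] at h'; linarith
  have hA_pos : (0:ℝ) < 1 - (2:ℝ)^(-1/(β-1)) := lt_trans hm_pos hA_gt
  have hD_pos : (0:ℝ) < 1 - (2:ℝ)^(-(β-α)/(β-1)) := lt_trans hm_pos hD_gt
  have hmα : m ^ α = t ^ α * (2:ℝ) ^ (-α - 1) := by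
    rw [hm_def, Real.mul_rpow ht_pos.le (Real.rpow_pos_of_pos h2pos _).le,
      ← Real.rpow_mul h2pos.le]
    rw [show (-1 - 1/α) * α = -α - 1 by field_simp]
  have hkey2 : P * (2:ℝ)^(α+1) * m ^ α = 1 := by
    have h22 : (2:ℝ)^(α+1) * (2:ℝ)^(-α-1) = 1 := by
      rw [← Real.rpow_add h2pos]; norm_num
    calc P * (2:ℝ)^(α+1) * m ^ α = (t^α * P) * ((2:ℝ)^(α+1) * (2:ℝ)^(-α-1)) := by
          rw [hmα]; ring
      _ = 1 := by rw [hkey, h22]; norm_num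
  have hpow_lt : m ^ (α-1) < (1 - (2:ℝ)^(-1/(β-1))) ^ (α-1) :=
    Real.rpow_lt_rpow hm_pos.le hA_gt (by linarith)
  have hmsplit : m ^ α = m ^ (α-1) * m := by
    rw [← Real.rpow_add_one (ne_of_gt hm_pos)]
    norm_num
  have hmpow_pos : 0 < m ^ (α-1) := Real.rpow_pos_of_pos hm_pos _
  have h2a_pos : (0:ℝ) < (2:ℝ)^(α+1) := Real.rpow_pos_of_pos h2pos _
  have part1 : 1 < (1 - (2:ℝ)^(-1/(β-1)))^(α-1) *
      (P * (2:ℝ)^(α+1) * (1 - (2:ℝ)^(-(β-α)/(β-1)))) := by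
    have e1 : m^(α-1) * (P * (2:ℝ)^(α+1) * m) = 1 := by
      have har : m^(α-1) * (P * (2:ℝ)^(α+1) * m) = P * (2:ℝ)^(α+1) * (m^(α-1) * m) := by ring
      rw [har, ← hmsplit, hkey2]
    calc (1:ℝ) = m^(α-1) * (P * (2:ℝ)^(α+1) * m) := e1.symm
    _ < _ := mul_lt_mul'' hpow_lt
        (mul_lt_mul_of_pos_left hD_gt (mul_pos hP_pos h2a_pos)) hmpow_pos.le
        (mul_pos (mul_pos hP_pos h2a_pos) hm_pos).le
  refine ⟨part1, ?_⟩
  set A := 1 - (2:ℝ)^(-1/(β-1)) with hA_def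
  set C := P * (2:ℝ)^(α+1) * (1 - (2:ℝ)^(-(β-α)/(β-1))) with hC_def
  have hC_pos : 0 < C := mul_pos (mul_pos hP_pos h2a_pos) hD_pos
  set δ := (1 + A^(α-1)*C)/2 with hδ_def
  have hApow_pos : 0 < A^(α-1) := Real.rpow_pos_of_pos hA_pos _
  have hδ1 : 1 < δ := by rw [hδ_def]; linarith
  have hδ_pos : (0:ℝ) < δ := by linarith
  have hδlt : δ < A^(α-1)*C := by rw [hδ_def]; linarith
  have hα1' : (0:ℝ) < α - 1 := by linarith
  set B₀ := A * (C/δ)^(1/(α-1)) with hB₀_def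
  have hB₀ : 1 < B₀ := by
    have h1' : 1 < A^(α-1)*C/δ := by rw [lt_div_iff₀ hδ_pos]; linarith
    have heq : B₀ = (A^(α-1)*C/δ)^(1/(α-1)) := by
      rw [hB₀_def, show A^(α-1)*C/δ = A^(α-1)*(C/δ) by ring,
        Real.mul_rpow hApow_pos.le (div_pos hC_pos hδ_pos).le,
        ← Real.rpow_mul hA_pos.le]
      rw [mul_one_div, div_self (ne_of_gt hα1'), Real.rpow_one]
    rw [heq]
    exact (Real.one_lt_rpow_iff_of_pos (by linarith)).mpr
      (Or.inl ⟨h1', by positivity⟩)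
  have htend : Filter.Tendsto (fun d : ℕ => (d:ℝ) ^ (2*α/(d:ℝ))) Filter.atTop (nhds 1) := by
    have h0 : Filter.Tendsto (fun x : ℝ => (x ^ (1/x)) ^ (2*α)) Filter.atTop (nhds 1) := by
      have hcont : ContinuousAt (fun y : ℝ => y ^ (2*α)) 1 :=
        Real.continuousAt_rpow_const 1 (2*α) (Or.inl one_ne_zero)
      have := hcont.tendsto.comp tendsto_rpow_div
      simpa [Function.comp_def] using this
    have h1' : Filter.Tendsto (fun d : ℕ => ((d:ℝ) ^ (1/(d:ℝ))) ^ (2*α))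
        Filter.atTop (nhds 1) := h0.comp tendsto_natCast_atTop_atTop
    refine h1'.congr (fun d => ?_)
    rw [← Real.rpow_mul (Nat.cast_nonneg d)]
    congr 1
    ring
  have hev : ∀ᶠ d : ℕ in Filter.atTop, (d:ℝ) ^ (2*α/(d:ℝ)) ≤ δ :=
    htend.eventually (eventually_le_nhds hδ1)
  obtain ⟨d₀, hd₀⟩ := Filter.eventually_atTop.mp hev
  refine ⟨max d₀ 1, B₀, hB₀, ?_⟩
  intro d hd
  have hd1 : 1 ≤ d := le_trans (le_max_right _ _) hd
  have hdd : (d:ℝ)^(2*α/(d:ℝ)) ≤ δ := hd₀ d (le_trans (le_max_left _ _) hd)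
  have hdR : (0:ℝ) < (d:ℝ) := by exact_mod_cast Nat.lt_of_lt_of_le Nat.zero_lt_one hd1
  have hdpow_pos : 0 < (d:ℝ)^(2*α/(d:ℝ)) := Real.rpow_pos_of_pos hdR _
  have hBeq : Bconst d α β p = A * (C / (d:ℝ)^(2*α/(d:ℝ)))^(1/(α-1)) := by
    unfold Bconst
    rw [← hP_def, ← hC_def, ← hA_def]
  rw [hBeq, hB₀_def]
  have hdiv : C/δ ≤ C / (d:ℝ)^(2*α/(d:ℝ)) :=
    div_le_div_of_nonneg_left hC_pos.le hdpow_pos hdd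
  have hrpow : (C/δ)^(1/(α-1)) ≤ (C / (d:ℝ)^(2*α/(d:ℝ)))^(1/(α-1)) :=
    Real.rpow_le_rpow (div_pos hC_pos hδ_pos).le hdiv (by positivity)
  exact mul_le_mul_of_nonneg_left hrpow hA_pos.le
end

section
/- Let Φ be a special deep ReLU neural network with input dimension d and depth L, whose input is restricted to [0,1]^d. Then there exists an ordinary deep ReLU neural network Φ' with N_w(Φ') = N_w(Φ), L(Φ') = L, and N(Φ',x) = N(Φ,x) for all x ∈ [0,1]^d. -/
open MeasureTheory Finset
open scoped ENNReal NNReal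

noncomputable section SpecialToOrdinaryAux

namespace SpecialToOrdinaryAux

variable {d : ℕ}

/-- The ordinary network obtained from a special one by shifting the collation
channel by constants `c ℓ` (and compensating at the output layer). -/
noncomputable def mk (Φ : SpecialReLUNN d) (c : ℕ → ℝ) : ReLUNN d where
  depth := Φ.depth
  two_le_depth := Φ.two_le_depth
  width := Φ.width
  width_zero := Φ.width_zero
  width_depth := Φ.width_depth
  weight := Φ.weight
  bias := fun ℓ i =>
    if ℓ + 1 < Φ.depth then
      Φ.bias ℓ i + (if (i : ℕ) = Φ.width (ℓ + 1) - 1 then c (ℓ + 1) - c ℓ else 0)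
    else if h : 0 < Φ.width ℓ then
      Φ.bias ℓ i - Φ.weight ℓ i ⟨Φ.width ℓ - 1, Nat.sub_lt h one_pos⟩ * c ℓ
    else Φ.bias ℓ i

lemma cont_hidden (Φ : SpecialReLUNN d) (ℓ : ℕ) :
    ∀ i : Fin (Φ.width ℓ), Continuous fun x => Φ.hidden ℓ x i := by
  induction ℓ with
  | zero => exact fun i => continuous_apply _
  | succ ℓ ih =>
    intro i
    have hm : Continuous fun x => (Φ.weight ℓ).mulVec (Φ.hidden ℓ x) i + Φ.bias ℓ i := by
      refine Continuous.add ?_ continuous_const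
      simp only [Matrix.mulVec, dotProduct]
      exact continuous_finset_sum _ fun j _ => continuous_const.mul (ih j)
    simp only [SpecialReLUNN.hidden]
    split_ifs
    · exact hm
    · exact continuous_const.max hm

end SpecialToOrdinaryAux

end SpecialToOrdinaryAux

/-- Lemma 2.4 of the paper: every special deep ReLU network, with
input restricted to the unit cube, can be emulated by an ordinary deep ReLU network of
the same width and depth. -/
theorem special_to_ordinary (d : ℕ) (Φ : SpecialReLUNN d) :
    ∃ Φ' : ReLUNN d, Φ'.nwidth = Φ.nwidth ∧ Φ'.depth = Φ.depth ∧
      ∀ x ∈ unitCube d, Φ'.output x = Φ.output x := by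
  classical
  -- bounds on the collation channel values over the compact cube
  have hex : ∀ ℓ : ℕ, ∃ C : ℝ, ∀ x ∈ unitCube d, ∀ h : 0 < Φ.width ℓ,
      -C ≤ Φ.hidden ℓ x ⟨Φ.width ℓ - 1, Nat.sub_lt h one_pos⟩ := by
    intro ℓ
    by_cases h : 0 < Φ.width ℓ
    · obtain ⟨C, hC⟩ := (isCompact_Icc (a := (0 : Fin d → ℝ)) (b := 1)).exists_bound_of_continuousOn
        ((SpecialToOrdinaryAux.cont_hidden Φ ℓ ⟨Φ.width ℓ - 1, Nat.sub_lt h one_pos⟩).continuousOn)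
      refine ⟨C, fun x hx h' => ?_⟩
      have := hC x hx
      rw [Real.norm_eq_abs] at this
      have h2 := (abs_le.mp this).1
      convert h2 using 3
    · exact ⟨0, fun x hx h' => absurd h' h⟩
  choose C hC using hex
  set c : ℕ → ℝ := fun ℓ => if ℓ = 0 then 0 else C ℓ with hcdef
  refine ⟨SpecialToOrdinaryAux.mk Φ c, rfl, rfl, ?_⟩
  intro x hx
  set Ψ : ReLUNN d := SpecialToOrdinaryAux.mk Φ c with hΨ
  have hx0 : ∀ j : Fin d, 0 ≤ x j := fun j => hx.1 j
  have h2d := Φ.two_le_depth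
  -- the source channels carry the input
  have src : ∀ ℓ, ℓ < Φ.depth → ∀ i : Fin (Φ.width ℓ), ∀ hi : (i : ℕ) < d,
      Φ.hidden ℓ x i = x ⟨(i : ℕ), hi⟩ := by
    intro ℓ
    induction ℓ with
    | zero => intro _ i hi; rfl
    | succ ℓ ih =>
      intro hℓ i hi
      have hiw : (i : ℕ) < Φ.width ℓ := by
        rcases Nat.eq_zero_or_pos ℓ with h0 | h0
        · subst h0; rw [Φ.width_zero]; exact hi
        · have := Φ.width_hidden ℓ h0 (by omega); omega
      have hcond : (i : ℕ) < d ∨ (i : ℕ) = Φ.width (ℓ + 1) - 1 := Or.inl hi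
      show (if (i : ℕ) < d ∨ (i : ℕ) = Φ.width (ℓ + 1) - 1 then
          (Φ.weight ℓ).mulVec (Φ.hidden ℓ x) i + Φ.bias ℓ i
        else max 0 ((Φ.weight ℓ).mulVec (Φ.hidden ℓ x) i + Φ.bias ℓ i)) = x ⟨(i : ℕ), hi⟩
      rw [if_pos hcond]
      have hsum : (Φ.weight ℓ).mulVec (Φ.hidden ℓ x) i = Φ.hidden ℓ x ⟨(i : ℕ), hiw⟩ := by
        simp only [Matrix.mulVec, dotProduct]
        rw [Finset.sum_eq_single (⟨(i : ℕ), hiw⟩ : Fin (Φ.width ℓ))]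
        · rw [Φ.source_weight ℓ hℓ i _ hi]; simp
        · intro b _ hb
          rw [Φ.source_weight ℓ hℓ i b hi, if_neg, zero_mul]
          exact fun h => hb (Fin.ext h)
        · intro h; exact absurd (Finset.mem_univ _) h
      rw [hsum, Φ.source_bias ℓ hℓ i hi, ih (by omega) _ hi, add_zero]
  -- main invariant: the ordinary network agrees with the special one up to a
  -- shift `c ℓ` on the collation channel
  have main : ∀ ℓ, ℓ < Φ.depth → ∀ i : Fin (Φ.width ℓ),
      Ψ.hidden ℓ x i = Φ.hidden ℓ x i +
        (if 1 ≤ ℓ ∧ (i : ℕ) = Φ.width ℓ - 1 then c ℓ else 0) := by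
    intro ℓ
    induction ℓ with
    | zero => intro _ i; simp [ReLUNN.hidden, SpecialReLUNN.hidden]; rfl
    | succ ℓ ih =>
      intro hℓ i
      have hℓ' : ℓ < Φ.depth := by omega
      have hw1 : d + 1 ≤ Φ.width (ℓ + 1) := Φ.width_hidden (ℓ + 1) (by omega) hℓ
      -- the pre-activation of Ψ at layer ℓ+1
      have hmv : (Φ.weight ℓ).mulVec (Ψ.hidden ℓ x) i
          = (Φ.weight ℓ).mulVec (Φ.hidden ℓ x) i +
            ∑ j, Φ.weight ℓ i j *
              (if 1 ≤ ℓ ∧ (j : ℕ) = Φ.width ℓ - 1 then c ℓ else 0) := by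
        simp only [Matrix.mulVec, dotProduct]
        rw [← Finset.sum_add_distrib]
        refine Finset.sum_congr rfl fun j _ => ?_
        rw [ih hℓ' j]; ring
      set S : ℝ := ∑ j, Φ.weight ℓ i j *
          (if 1 ≤ ℓ ∧ (j : ℕ) = Φ.width ℓ - 1 then c ℓ else 0) with hSdef
      have hΨb : Ψ.bias ℓ i = Φ.bias ℓ i +
          (if (i : ℕ) = Φ.width (ℓ + 1) - 1 then c (ℓ + 1) - c ℓ else 0) := by
        show (if ℓ + 1 < Φ.depth then _ else _) = _
        rw [if_pos hℓ]
      have hhidΨ : Ψ.hidden (ℓ + 1) x i =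
          max 0 ((Φ.weight ℓ).mulVec (Φ.hidden ℓ x) i + S + Ψ.bias ℓ i) := by
        show max 0 ((Φ.weight ℓ).mulVec (Ψ.hidden ℓ x) i + Ψ.bias ℓ i) = _
        rw [hmv]
      by_cases hid : (i : ℕ) < d
      · -- source channel
        have hic : ¬ (i : ℕ) = Φ.width (ℓ + 1) - 1 := by omega
        have hS : S = 0 := by
          refine Finset.sum_eq_zero fun j _ => ?_
          split_ifs with hj
          · obtain ⟨hl1, hj2⟩ := hj
            have hwℓ : d + 1 ≤ Φ.width ℓ := Φ.width_hidden ℓ hl1 (by omega)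
            rw [Φ.source_weight ℓ hℓ i j hid, if_neg (by omega), zero_mul]
          · exact mul_zero _
        have hsp : Φ.hidden (ℓ + 1) x i =
            (Φ.weight ℓ).mulVec (Φ.hidden ℓ x) i + Φ.bias ℓ i := by
          show (if (i : ℕ) < d ∨ (i : ℕ) = Φ.width (ℓ + 1) - 1 then _ else _) = _
          rw [if_pos (Or.inl hid)]
        have hval : Φ.hidden (ℓ + 1) x i = x ⟨(i : ℕ), hid⟩ := src (ℓ + 1) hℓ i hid
        rw [hhidΨ, hS, hΨb, if_neg hic, if_neg (by simp [hic]), add_zero, add_zero, ← hsp,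
          hval, add_zero]
        exact max_eq_right (hx0 _)
      · by_cases hic : (i : ℕ) = Φ.width (ℓ + 1) - 1
        · -- collation channel
          have hsp : Φ.hidden (ℓ + 1) x i =
              (Φ.weight ℓ).mulVec (Φ.hidden ℓ x) i + Φ.bias ℓ i := by
            show (if (i : ℕ) < d ∨ (i : ℕ) = Φ.width (ℓ + 1) - 1 then _ else _) = _
            rw [if_pos (Or.inr hic)]
          have hS : S = if 1 ≤ ℓ then c ℓ else 0 := by
            rcases Nat.eq_zero_or_pos ℓ with h0 | hl1
            · subst h0
              rw [if_neg (by omega)]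
              exact Finset.sum_eq_zero fun j _ => by rw [if_neg (by omega), mul_zero]
            · have hl1' : 1 ≤ ℓ := hl1
              have hwℓ : d + 1 ≤ Φ.width ℓ := Φ.width_hidden ℓ hl1 (by omega)
              have hpos : Φ.width ℓ - 1 < Φ.width ℓ := by omega
              rw [if_pos hl1', hSdef,
                Finset.sum_eq_single (⟨Φ.width ℓ - 1, hpos⟩ : Fin (Φ.width ℓ))]
              · rw [if_pos ⟨hl1', rfl⟩,
                  Φ.collation_accum ℓ hl1 hℓ i ⟨Φ.width ℓ - 1, hpos⟩ rfl hic, one_mul]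
              · intro b _ hb
                rw [if_neg, mul_zero]
                exact fun h => hb (Fin.ext h.2)
              · intro h; exact absurd (Finset.mem_univ _) h
          have hcℓ1 : c (ℓ + 1) = C (ℓ + 1) := by simp [hcdef]
          have hpre : (Φ.weight ℓ).mulVec (Φ.hidden ℓ x) i + S + Ψ.bias ℓ i
              = Φ.hidden (ℓ + 1) x i + c (ℓ + 1) := by
            rw [hΨb, if_pos hic, hS, hsp]
            rcases Nat.eq_zero_or_pos ℓ with h0 | hl1
            · subst h0
              rw [if_neg (by omega)]
              have : c 0 = 0 := by simp [hcdef]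
              rw [this]; ring
            · have hl1' : 1 ≤ ℓ := hl1
              rw [if_pos hl1']; ring
          have hpos1 : 0 < Φ.width (ℓ + 1) := by omega
          have hbd : -C (ℓ + 1) ≤ Φ.hidden (ℓ + 1) x i := by
            have := hC (ℓ + 1) x hx hpos1
            have hieq : i = (⟨Φ.width (ℓ + 1) - 1, Nat.sub_lt hpos1 one_pos⟩ :
                Fin (Φ.width (ℓ + 1))) := Fin.ext hic
            rw [hieq]; exact this
          have hnn : 0 ≤ Φ.hidden (ℓ + 1) x i + c (ℓ + 1) := by
            rw [hcℓ1]; linarith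
          rw [hhidΨ, hpre, max_eq_right hnn, if_pos ⟨by omega, hic⟩]
        · -- ordinary hidden node
          have hS : S = 0 := by
            refine Finset.sum_eq_zero fun j _ => ?_
            split_ifs with hj
            · obtain ⟨hl1, hj2⟩ := hj
              rw [Φ.collation_no_forward ℓ hl1 hℓ i j hj2 hic, zero_mul]
            · exact mul_zero _
          have hsp : Φ.hidden (ℓ + 1) x i =
              max 0 ((Φ.weight ℓ).mulVec (Φ.hidden ℓ x) i + Φ.bias ℓ i) := by
            show (if (i : ℕ) < d ∨ (i : ℕ) = Φ.width (ℓ + 1) - 1 then _ else _) = _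
            rw [if_neg (by tauto)]
          rw [hhidΨ, hS, hΨb, if_neg hic, add_zero, add_zero, ← hsp,
            if_neg (by simp [hic]), add_zero]
  -- conclude for the output layer
  have hL1 : Φ.depth - 1 + 1 = Φ.depth := by omega
  have hL1lt : Φ.depth - 1 < Φ.depth := by omega
  have hL1pos : 1 ≤ Φ.depth - 1 := by omega
  have hwL1 : d + 1 ≤ Φ.width (Φ.depth - 1) := Φ.width_hidden _ (by omega) (by omega)
  have hposL1 : 0 < Φ.width (Φ.depth - 1) := by omega
  have hout : Ψ.output x = Φ.output x := by
    set L1 := Φ.depth - 1 with hL1def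
    set coll : Fin (Φ.width L1) := ⟨Φ.width L1 - 1, Nat.sub_lt hposL1 one_pos⟩ with hcoll
    show (Φ.weight L1).mulVec (Ψ.hidden L1 x) Φ.outIdx + Ψ.bias L1 Φ.outIdx
        = (Φ.weight L1).mulVec (Φ.hidden L1 x) Φ.outIdx + Φ.bias L1 Φ.outIdx
    have hmv : (Φ.weight L1).mulVec (Ψ.hidden L1 x) Φ.outIdx
        = (Φ.weight L1).mulVec (Φ.hidden L1 x) Φ.outIdx +
          Φ.weight L1 Φ.outIdx coll * c L1 := by
      simp only [Matrix.mulVec, dotProduct]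
      have hstep : ∀ j : Fin (Φ.width L1),
          Φ.weight L1 Φ.outIdx j * Ψ.hidden L1 x j
            = Φ.weight L1 Φ.outIdx j * Φ.hidden L1 x j +
              Φ.weight L1 Φ.outIdx j *
                (if 1 ≤ L1 ∧ (j : ℕ) = Φ.width L1 - 1 then c L1 else 0) := by
        intro j; rw [main L1 hL1lt j]; ring
      rw [Finset.sum_congr rfl fun j _ => hstep j, Finset.sum_add_distrib]
      congr 1
      rw [Finset.sum_eq_single coll]
      · rw [if_pos ⟨hL1pos, rfl⟩]
      · intro b _ hb
        rw [if_neg, mul_zero]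
        exact fun h => hb (Fin.ext h.2)
      · intro h; exact absurd (Finset.mem_univ _) h
    have hbias : Ψ.bias L1 Φ.outIdx
        = Φ.bias L1 Φ.outIdx - Φ.weight L1 Φ.outIdx coll * c L1 := by
      show (if L1 + 1 < Φ.depth then _
        else if h : 0 < Φ.width L1 then
          Φ.bias L1 Φ.outIdx - Φ.weight L1 Φ.outIdx ⟨Φ.width L1 - 1, Nat.sub_lt h one_pos⟩ * c L1
        else Φ.bias L1 Φ.outIdx) = _
      rw [if_neg (by omega), dif_pos hposL1]
    rw [hmv, hbias]; ring
  exact hout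
end

section
/- Let d ∈ ℕ, 1 < α ≤ 2, m ∈ ℕ₀, and y = (y_1,…,y_{2^m}) ∈ {0,1}^{2^m}. Define f_y on [0,1]^d by f_y(x) = 18^{−d}·2^{−αm}·(Σ_{j=1}^{2^m} y_j ψ_{m,j}(x_1))·∏_{ℓ=2}^d ψ_{0,1}(x_ℓ). Then f_y belongs to the unit ball Ů^α_∞ of H̊^α_∞; in particular f_y vanishes on the boundary of [0,1]^d and |Δ^{2,u}_h(f_y, x)| ≤ ∏_{i∈u} |h_i|^α for every u ⊆ {1,…,d}, every h ∈ [−1,1]^d and every admissible x ∈ [0,1]^d. -/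
open MeasureTheory Finset
open scoped ENNReal NNReal

noncomputable section
namespace FyAux

noncomputable def relu (t : ℝ) : ℝ := max 0 t

lemma relu_of_nonpos {t : ℝ} (h : t ≤ 0) : relu t = 0 := max_eq_left h
lemma relu_of_nonneg {t : ℝ} (h : 0 ≤ t) : relu t = t := max_eq_right h

lemma key_q (a b : ℝ) : |relu b ^ 2 - relu a ^ 2 - (b - a) * (2 * relu a)| ≤ (b - a) ^ 2 := by
  rcases le_total a 0 with ha | ha <;> rcases le_total b 0 with hb | hb
  · rw [relu_of_nonpos ha, relu_of_nonpos hb, abs_le]; constructor <;> nlinarith [sq_nonneg (b - a)]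
  · rw [relu_of_nonpos ha, relu_of_nonneg hb, abs_le]
    constructor <;> nlinarith [sq_nonneg (b - a), mul_nonneg (neg_nonneg.2 ha) hb]
  · rw [relu_of_nonneg ha, relu_of_nonpos hb, abs_le]
    constructor <;> nlinarith [sq_nonneg (b - a), sq_nonneg b, mul_nonneg ha (neg_nonneg.2 hb)]
  · rw [relu_of_nonneg ha, relu_of_nonneg hb, abs_le]; constructor <;> nlinarith [sq_nonneg (b - a)]

lemma hq (x : ℝ) : HasDerivAt (fun t => relu t ^ 2) (2 * relu x) x := by
  rw [hasDerivAt_iff_isLittleO, Asymptotics.isLittleO_iff]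
  intro c hc
  rw [Metric.eventually_nhds_iff]
  refine ⟨c, hc, fun y hy => ?_⟩
  have h2 : |y - x| < c := by simpa [Real.dist_eq] using hy
  simp only [smul_eq_mul, Real.norm_eq_abs]
  calc |relu y ^ 2 - relu x ^ 2 - (y - x) * (2 * relu x)| ≤ (y - x) ^ 2 := key_q x y
    _ = |y - x| * |y - x| := by rw [← abs_mul, abs_of_nonneg (mul_self_nonneg (y - x))]; ring
    _ ≤ c * |y - x| := by nlinarith [abs_nonneg (y - x)]

noncomputable def Dre (t : ℝ) : ℝ := relu t - 3 * relu (t - 1) + 3 * relu (t - 2) - relu (t - 3)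

lemma M3eq (x : ℝ) :
    M3spline x = (relu x ^ 2 - 3 * relu (x - 1) ^ 2 + 3 * relu (x - 2) ^ 2 - relu (x - 3) ^ 2) / 2 := by
  unfold M3spline
  split_ifs with h1 h2 h3
  · rw [relu_of_nonneg h1.1, relu_of_nonpos (by linarith [h1.2]), relu_of_nonpos (by linarith [h1.2]),
      relu_of_nonpos (by linarith [h1.2])]
    ring
  · rw [relu_of_nonneg (by linarith [h2.1]), relu_of_nonneg (by linarith [h2.1]),
      relu_of_nonpos (by linarith [h2.2]), relu_of_nonpos (by linarith [h2.2])]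
    ring
  · rw [relu_of_nonneg (by linarith [h3.1]), relu_of_nonneg (by linarith [h3.1]),
      relu_of_nonneg (by linarith [h3.1]), relu_of_nonpos (by linarith [h3.2])]
    ring
  · push_neg at h1 h2 h3
    rcases le_or_gt 0 x with hx | hx
    · have hx3 : 3 ≤ x := h3 (h2 (h1 hx))
      rw [relu_of_nonneg hx, relu_of_nonneg (by linarith), relu_of_nonneg (by linarith),
        relu_of_nonneg (by linarith)]
      ring
    · rw [relu_of_nonpos hx.le, relu_of_nonpos (by linarith), relu_of_nonpos (by linarith),
        relu_of_nonpos (by linarith)]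
      norm_num

lemma hM3 (x : ℝ) : HasDerivAt M3spline (Dre x) x := by
  have h1 : HasDerivAt (fun t : ℝ => relu (t - 1) ^ 2) (2 * relu (x - 1)) x := by
    simpa [Function.comp_def] using (hq (x - 1)).comp x ((hasDerivAt_id x).sub_const 1)
  have h2 : HasDerivAt (fun t : ℝ => relu (t - 2) ^ 2) (2 * relu (x - 2)) x := by
    simpa [Function.comp_def] using (hq (x - 2)).comp x ((hasDerivAt_id x).sub_const 2)
  have h3 : HasDerivAt (fun t : ℝ => relu (t - 3) ^ 2) (2 * relu (x - 3)) x := by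
    simpa [Function.comp_def] using (hq (x - 3)).comp x ((hasDerivAt_id x).sub_const 3)
  have hc : HasDerivAt
      (fun t : ℝ => (relu t ^ 2 - 3 * relu (t - 1) ^ 2 + 3 * relu (t - 2) ^ 2 - relu (t - 3) ^ 2) / 2)
      ((2 * relu x - 3 * (2 * relu (x - 1)) + 3 * (2 * relu (x - 2)) - 2 * relu (x - 3)) / 2) x :=
    ((((hq x).sub (h1.const_mul 3)).add (h2.const_mul 3)).sub h3).div_const 2
  have heq : M3spline = fun t : ℝ =>
      (relu t ^ 2 - 3 * relu (t - 1) ^ 2 + 3 * relu (t - 2) ^ 2 - relu (t - 3) ^ 2) / 2 :=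
    funext M3eq
  rw [heq]
  convert hc using 1
  unfold Dre; ring

lemma Dre_cases (x : ℝ) :
    (x ≤ 0 ∧ x ≤ 0 ∧ Dre x = 0) ∨ (0 ≤ x ∧ x ≤ 1 ∧ Dre x = x) ∨
    (1 ≤ x ∧ x ≤ 2 ∧ Dre x = 3 - 2 * x) ∨ (2 ≤ x ∧ x ≤ 3 ∧ Dre x = x - 3) ∨
    (3 ≤ x ∧ 3 ≤ x ∧ Dre x = 0) := by
  unfold Dre
  rcases le_total x 0 with h | h
  · refine Or.inl ⟨h, h, ?_⟩
    rw [relu_of_nonpos h, relu_of_nonpos (by linarith), relu_of_nonpos (by linarith),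
      relu_of_nonpos (by linarith)]
    ring
  rcases le_total x 1 with h1 | h1
  · refine Or.inr (Or.inl ⟨h, h1, ?_⟩)
    rw [relu_of_nonneg h, relu_of_nonpos (by linarith), relu_of_nonpos (by linarith),
      relu_of_nonpos (by linarith)]
    ring
  rcases le_total x 2 with h2 | h2
  · refine Or.inr (Or.inr (Or.inl ⟨h1, h2, ?_⟩))
    rw [relu_of_nonneg (by linarith), relu_of_nonneg (by linarith), relu_of_nonpos (by linarith),
      relu_of_nonpos (by linarith)]
    ring
  rcases le_total x 3 with h3 | h3
  · refine Or.inr (Or.inr (Or.inr (Or.inl ⟨h2, h3, ?_⟩)))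
    rw [relu_of_nonneg (by linarith), relu_of_nonneg (by linarith), relu_of_nonneg (by linarith),
      relu_of_nonpos (by linarith)]
    ring
  · refine Or.inr (Or.inr (Or.inr (Or.inr ⟨h3, h3, ?_⟩)))
    rw [relu_of_nonneg (by linarith), relu_of_nonneg (by linarith), relu_of_nonneg (by linarith),
      relu_of_nonneg (by linarith)]
    ring

lemma lipDre_le {s t : ℝ} (hst : s ≤ t) : |Dre t - Dre s| ≤ 2 * (t - s) := by
  rcases Dre_cases s with ⟨a1, a2, a3⟩ | ⟨a1, a2, a3⟩ | ⟨a1, a2, a3⟩ | ⟨a1, a2, a3⟩ | ⟨a1, a2, a3⟩ <;>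
    rcases Dre_cases t with ⟨b1, b2, b3⟩ | ⟨b1, b2, b3⟩ | ⟨b1, b2, b3⟩ | ⟨b1, b2, b3⟩ | ⟨b1, b2, b3⟩ <;>
    rw [a3, b3, abs_le] <;> constructor <;> linarith

lemma lipDre (s t : ℝ) : |Dre t - Dre s| ≤ 2 * |t - s| := by
  rcases le_total s t with h | h
  · rw [abs_of_nonneg (sub_nonneg.2 h)]; exact lipDre_le h
  · calc |Dre t - Dre s| = |Dre s - Dre t| := abs_sub_comm _ _
      _ ≤ 2 * (s - t) := lipDre_le h
      _ = 2 * |t - s| := by rw [abs_of_nonpos (sub_nonpos.2 h)]; ring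

lemma Dre_zero_left {u : ℝ} (h : u ≤ 0) : Dre u = 0 := by
  unfold Dre
  rw [relu_of_nonpos h, relu_of_nonpos (by linarith), relu_of_nonpos (by linarith),
    relu_of_nonpos (by linarith)]
  ring

lemma Dre_zero_right {u : ℝ} (h : 3 ≤ u) : Dre u = 0 := by
  unfold Dre
  rw [relu_of_nonneg (by linarith), relu_of_nonneg (by linarith), relu_of_nonneg (by linarith),
    relu_of_nonneg (by linarith)]
  ring

lemma M3_zero_left {u : ℝ} (h : u ≤ 0) : M3spline u = 0 := by
  unfold M3spline
  split_ifs with h1 h2 h3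
  · have : u = 0 := le_antisymm h h1.1
    rw [this]; norm_num
  · linarith [h2.1]
  · linarith [h3.1]
  · rfl

lemma M3_zero_right {u : ℝ} (h : 3 ≤ u) : M3spline u = 0 := by
  unfold M3spline
  split_ifs with h1 h2 h3
  · linarith [h1.2]
  · linarith [h2.2]
  · linarith [h3.2]
  · rfl

lemma M3_abs_le (u : ℝ) : |M3spline u| ≤ 3 / 4 := by
  unfold M3spline
  split_ifs with h1 h2 h3 <;> rw [abs_le] <;> constructor <;>
    nlinarith [sq_nonneg u, sq_nonneg (u - 1), sq_nonneg (u - 2), sq_nonneg (u - 3),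
      sq_nonneg (u - 3/2), sq_nonneg (3 - u)]

lemma psiQ_zero_left {u : ℝ} (h : u ≤ 0) : psiQ u = 0 := by
  unfold psiQ; exact M3_zero_left (by linarith)

lemma psiQ_zero_right {u : ℝ} (h : 1 ≤ u) : psiQ u = 0 := by
  unfold psiQ; exact M3_zero_right (by linarith)

lemma psiQ_abs_le (u : ℝ) : |psiQ u| ≤ 3 / 4 := M3_abs_le _

lemma zygmund {f f' : ℝ → ℝ} {L : ℝ} (hf : ∀ t, HasDerivAt f (f' t) t)
    (hL : ∀ s t : ℝ, |f' t - f' s| ≤ L * |t - s|) {x h : ℝ} (hh : 0 ≤ h) :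
    |f (x + 2 * h) - 2 * f (x + h) + f x| ≤ L * h ^ 2 := by
  set G : ℝ → ℝ := fun t => f (t + h) - f t with hG
  have hG' : ∀ t, HasDerivAt G (f' (t + h) - f' t) t := by
    intro t
    exact HasDerivAt.sub (by simpa [Function.comp_def] using (hf (t + h)).comp t ((hasDerivAt_id t).add_const h)) (hf t)
  have hbound : ∀ t ∈ Set.Icc x (x + h), ‖f' (t + h) - f' t‖ ≤ L * h := by
    intro t _
    have h1 := hL t (t + h)
    rw [Real.norm_eq_abs]
    calc |f' (t + h) - f' t| ≤ L * |t + h - t| := h1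
      _ = L * h := by rw [show t + h - t = h by ring, abs_of_nonneg hh]
  have key := Convex.norm_image_sub_le_of_norm_hasDerivWithin_le
    (f' := fun t => f' (t + h) - f' t)
    (fun t _ => (hG' t).hasDerivWithinAt) hbound (convex_Icc x (x + h))
    (Set.left_mem_Icc.2 (by linarith)) (Set.right_mem_Icc.2 (by linarith))
  have e2 : f (x + 2 * h) - 2 * f (x + h) + f x = G (x + h) - G x := by
    show f (x + 2 * h) - 2 * f (x + h) + f x = (f (x + h + h) - f (x + h)) - (f (x + h) - f x)
    rw [show x + h + h = x + 2 * h by ring]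
    ring
  rw [e2]
  rw [Real.norm_eq_abs, Real.norm_eq_abs] at key
  calc |G (x + h) - G x| ≤ L * h * |x + h - x| := key
    _ = L * h ^ 2 := by rw [show x + h - x = h by ring, abs_of_nonneg hh]; ring

lemma hpsiM {M c : ℝ} (p : ℝ) :
    HasDerivAt (fun t => psiQ (M * t - c)) (M * (3 * Dre (3 * (M * p - c)))) p := by
  have hin : HasDerivAt (fun t : ℝ => 3 * (M * t - c)) (3 * M) p := by
    simpa using (((hasDerivAt_id p).const_mul M).sub_const c).const_mul 3
  have hcomp := (hM3 (3 * (M * p - c))).comp p hin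
  have he : (fun t => psiQ (M * t - c)) = fun t => M3spline (3 * (M * t - c)) := by
    funext t; rfl
  rw [he]
  simp only [Function.comp_def] at hcomp
  exact hcomp.congr_deriv (by ring)

lemma hpsiQ' (p : ℝ) : HasDerivAt psiQ (3 * Dre (3 * p)) p := by
  have hin : HasDerivAt (fun t : ℝ => 3 * t) (3 : ℝ) p := by
    simpa using (hasDerivAt_id p).const_mul (3 : ℝ)
  have hcomp := (hM3 (3 * p)).comp p hin
  have he : psiQ = fun t => M3spline (3 * t) := rfl
  rw [he]
  simp only [Function.comp_def] at hcomp
  exact hcomp.congr_deriv (by ring)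

lemma lip_psiQ' (s p : ℝ) : |3 * Dre (3 * p) - 3 * Dre (3 * s)| ≤ 18 * |p - s| := by
  have h := lipDre (3 * s) (3 * p)
  have harg : |3 * p - 3 * s| = 3 * |p - s| := by
    rw [show 3 * p - 3 * s = 3 * (p - s) by ring, abs_mul, abs_of_nonneg (by norm_num : (0:ℝ) ≤ 3)]
  rw [harg] at h
  rw [show 3 * Dre (3 * p) - 3 * Dre (3 * s) = 3 * (Dre (3 * p) - Dre (3 * s)) by ring, abs_mul,
    abs_of_nonneg (by norm_num : (0:ℝ) ≤ 3)]
  linarith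

lemma psiQ_delta2 {τ h : ℝ} (hh : 0 ≤ h) :
    |psiQ (τ + 2 * h) - 2 * psiQ (τ + h) + psiQ τ| ≤ 18 * h ^ 2 :=
  zygmund hpsiQ' (fun s p => lip_psiQ' s p) hh

lemma lipE {M c : ℝ} (hM : 0 ≤ M) (s p : ℝ) :
    |M * (3 * Dre (3 * (M * p - c))) - M * (3 * Dre (3 * (M * s - c)))| ≤ 18 * M ^ 2 * |p - s| := by
  have h := lipDre (3 * (M * s - c)) (3 * (M * p - c))
  have harg : |3 * (M * p - c) - (3 * (M * s - c))| = 3 * M * |p - s| := by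
    rw [show 3 * (M * p - c) - (3 * (M * s - c)) = 3 * M * (p - s) by ring, abs_mul,
      abs_of_nonneg (by positivity : (0:ℝ) ≤ 3 * M)]
  rw [harg] at h
  rw [show M * (3 * Dre (3 * (M * p - c))) - M * (3 * Dre (3 * (M * s - c)))
      = 3 * M * (Dre (3 * (M * p - c)) - Dre (3 * (M * s - c))) by ring, abs_mul,
    abs_of_nonneg (by positivity : (0:ℝ) ≤ 3 * M)]
  calc 3 * M * |Dre (3 * (M * p - c)) - Dre (3 * (M * s - c))|
      ≤ 3 * M * (2 * (3 * M * |p - s|)) := mul_le_mul_of_nonneg_left h (by positivity)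
    _ = 18 * M ^ 2 * |p - s| := by ring

lemma glue_lip {E₀ E₁ : ℝ → ℝ} {A B L z : ℝ} (hA : |A| ≤ 1) (hB : |B| ≤ 1)
    (l0 : ∀ s t : ℝ, |E₀ t - E₀ s| ≤ L * |t - s|) (l1 : ∀ s t : ℝ, |E₁ t - E₁ s| ≤ L * |t - s|)
    (z0 : ∀ t, z ≤ t → E₀ t = 0) (z1 : ∀ t, t ≤ z → E₁ t = 0) (s t : ℝ) :
    |(A * E₀ t + B * E₁ t) - (A * E₀ s + B * E₁ s)| ≤ L * |t - s| := by
  have habs : ∀ C X Y W : ℝ, |C| ≤ 1 → |X - Y| ≤ W → |C * X - C * Y| ≤ W := by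
    intro C X Y W hC hXY
    rw [show C * X - C * Y = C * (X - Y) by ring, abs_mul]
    exact le_trans (mul_le_of_le_one_left (abs_nonneg _) hC) hXY
  have key : ∀ u v : ℝ, u ≤ v → |(A * E₀ v + B * E₁ v) - (A * E₀ u + B * E₁ u)| ≤ L * (v - u) := by
    intro u v huv
    rcases le_total v z with hvz | hzv
    · rw [z1 v hvz, z1 u (huv.trans hvz), mul_zero, add_zero, add_zero]
      apply habs _ _ _ _ hA
      have h := l0 u v
      rwa [abs_of_nonneg (sub_nonneg.2 huv)] at h
    · rcases le_total z u with hzu | huz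
      · rw [z0 u hzu, z0 v (hzu.trans huv), mul_zero, zero_add, zero_add]
        apply habs _ _ _ _ hB
        have h := l1 u v
        rwa [abs_of_nonneg (sub_nonneg.2 huv)] at h
      · have e : (A * E₀ v + B * E₁ v) - (A * E₀ u + B * E₁ u)
            = (B * E₁ v - B * E₁ z) + (A * E₀ z - A * E₀ u) := by
          rw [z0 v hzv, z1 u huz, z1 z le_rfl, z0 z le_rfl]
          ring
        rw [e]
        have h1 : |B * E₁ v - B * E₁ z| ≤ L * (v - z) := by
          apply habs _ _ _ _ hB
          have h := l1 z v
          rwa [abs_of_nonneg (sub_nonneg.2 hzv)] at h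
        have h2 : |A * E₀ z - A * E₀ u| ≤ L * (z - u) := by
          apply habs _ _ _ _ hA
          have h := l0 u z
          rwa [abs_of_nonneg (sub_nonneg.2 huz)] at h
        calc |(B * E₁ v - B * E₁ z) + (A * E₀ z - A * E₀ u)|
            ≤ |B * E₁ v - B * E₁ z| + |A * E₀ z - A * E₀ u| := abs_add_le _ _
          _ ≤ L * (v - u) := by linarith
  rcases le_total s t with h | h
  · rw [abs_of_nonneg (sub_nonneg.2 h)]; exact key s t h
  · rw [abs_sub_comm, abs_of_nonpos (sub_nonpos.2 h)]
    have := key t s h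
    linarith

lemma pow2_le_rpow {h α : ℝ} (hh : 0 ≤ h) (h1 : h ≤ 1) (hα1 : 1 < α) (hα2 : α ≤ 2) :
    h ^ (2 : ℕ) ≤ h ^ α := by
  rcases eq_or_lt_of_le hh with h0 | hp
  · rw [← h0, Real.zero_rpow (by linarith)]
    norm_num
  · have key := Real.rpow_le_rpow_of_exponent_ge hp h1 hα2
    rwa [show h ^ (2:ℝ) = h ^ (2:ℕ) by rw [← Real.rpow_natCast h 2]; norm_num] at key

end FyAux
namespace FyAux

noncomputable def Yf (m : ℕ) (y : Fin (2 ^ m) → ℝ) (j : ℕ) : ℝ :=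
  if hj : j < 2 ^ m then y ⟨j, hj⟩ else 0

lemma Yf_abs {m : ℕ} {y : Fin (2 ^ m) → ℝ} (hy : ∀ j, y j = 0 ∨ y j = 1) (j : ℕ) :
    |Yf m y j| ≤ 1 := by
  unfold Yf
  split_ifs with hj
  · rcases hy ⟨j, hj⟩ with h | h <;> rw [h] <;> norm_num
  · norm_num

noncomputable def Sg (m : ℕ) (y : Fin (2 ^ m) → ℝ) (t : ℝ) : ℝ :=
  ∑ j ∈ Finset.range (2 ^ m), Yf m y j * psiQ ((2:ℝ) ^ m * t - j)

lemma gsum_eq_Sg (m : ℕ) (y : Fin (2 ^ m) → ℝ) (t : ℝ) :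
    (∑ j : Fin (2 ^ m), y j * psiks m ((j : ℕ) + 1) t) = Sg m y t := by
  rw [Sg, ← Fin.sum_univ_eq_sum_range (fun j => Yf m y j * psiQ ((2:ℝ) ^ m * t - j)) (2 ^ m)]
  apply Finset.sum_congr rfl
  intro j _
  congr 1
  · unfold Yf
    rw [dif_pos j.isLt]
  · unfold psiks
    congr 1
    push_cast
    ring

lemma Sg_abs_le {m : ℕ} {y : Fin (2 ^ m) → ℝ} (hy : ∀ j, y j = 0 ∨ y j = 1) {t : ℝ} (ht : 0 ≤ t) :
    |Sg m y t| ≤ 3 / 4 := by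
  have h2m : (0:ℝ) < (2:ℝ) ^ m := by positivity
  set j₀ := Nat.floor ((2:ℝ) ^ m * t) with hj0def
  have hle : (j₀ : ℝ) ≤ (2:ℝ) ^ m * t := Nat.floor_le (by positivity)
  have hlt : (2:ℝ) ^ m * t < j₀ + 1 := Nat.lt_floor_add_one _
  have h0 : ∀ j ∈ Finset.range (2 ^ m), j ≠ j₀ → Yf m y j * psiQ ((2:ℝ) ^ m * t - j) = 0 := by
    intro j _ hne
    rcases lt_or_gt_of_ne hne with hl | hg
    · have hc : (j : ℝ) + 1 ≤ (j₀ : ℝ) := by exact_mod_cast hl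
      rw [psiQ_zero_right (by linarith), mul_zero]
    · have hc : (j₀ : ℝ) + 1 ≤ (j : ℝ) := by exact_mod_cast hg
      rw [psiQ_zero_left (by linarith), mul_zero]
  have h1 : j₀ ∉ Finset.range (2 ^ m) → Yf m y j₀ * psiQ ((2:ℝ) ^ m * t - j₀) = 0 := by
    intro hnm
    rw [Finset.mem_range] at hnm
    unfold Yf
    rw [dif_neg hnm, zero_mul]
  rw [Sg, Finset.sum_eq_single j₀ h0 h1]
  calc |Yf m y j₀ * psiQ ((2:ℝ) ^ m * t - j₀)| = |Yf m y j₀| * |psiQ ((2:ℝ) ^ m * t - j₀)| :=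
      abs_mul _ _
    _ ≤ 1 * (3 / 4) := mul_le_mul (Yf_abs hy j₀) (psiQ_abs_le _) (abs_nonneg _) zero_le_one
    _ = 3 / 4 := by ring

lemma Sg_zero0 {m : ℕ} (y : Fin (2 ^ m) → ℝ) : Sg m y 0 = 0 := by
  rw [Sg]
  apply Finset.sum_eq_zero
  intro j _
  rw [psiQ_zero_left (by simp), mul_zero]

lemma Sg_zero1 {m : ℕ} (y : Fin (2 ^ m) → ℝ) : Sg m y 1 = 0 := by
  rw [Sg]
  apply Finset.sum_eq_zero
  intro j hj
  rw [Finset.mem_range] at hj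
  have hc : (j : ℝ) + 1 ≤ (2:ℝ) ^ m := by
    have : (j : ℝ) + 1 ≤ ((2 ^ m : ℕ) : ℝ) := by exact_mod_cast hj
    rwa [Nat.cast_pow, Nat.cast_ofNat] at this
  rw [psiQ_zero_right (by linarith), mul_zero]

lemma Sg_delta2 {m : ℕ} {y : Fin (2 ^ m) → ℝ} (hy : ∀ j, y j = 0 ∨ y j = 1)
    {α : ℝ} (hα1 : 1 < α) (hα2 : α ≤ 2) {t h : ℝ} (ht : 0 ≤ t) (hh : 0 ≤ h)
    (hth : t + 2 * h ≤ 1) :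
    |Sg m y (t + 2 * h) - 2 * Sg m y (t + h) + Sg m y t|
      ≤ 18 * (2:ℝ) ^ (α * (m : ℝ)) * h ^ α := by
  have h2m : (0:ℝ) < (2:ℝ) ^ m := by positivity
  have hwα : (2:ℝ) ^ (α * (m : ℝ)) * h ^ α = ((2:ℝ) ^ m * h) ^ α := by
    rw [mul_comm α, Real.rpow_mul (by norm_num : (0:ℝ) ≤ 2), Real.rpow_natCast,
      ← Real.mul_rpow (le_of_lt h2m) hh]
  rcases eq_or_lt_of_le hh with h0 | hpos
  · rw [← h0]
    rw [show t + 2 * 0 = t by ring, show t + 0 = t by ring,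
      show Sg m y t - 2 * Sg m y t + Sg m y t = 0 by ring, abs_zero,
      Real.zero_rpow (by linarith : α ≠ 0), mul_zero]
  have hwpos : 0 < (2:ℝ) ^ m * h := by positivity
  rcases le_or_gt (1/2 : ℝ) ((2:ℝ) ^ m * h) with hcr | hfine
  · -- crude case
    have b1 := Sg_abs_le hy (show (0:ℝ) ≤ t + 2 * h by linarith)
    have b2 := Sg_abs_le hy (show (0:ℝ) ≤ t + h by linarith)
    have b3 := Sg_abs_le hy ht
    have hrhs : (3:ℝ) ≤ 18 * (2:ℝ) ^ (α * (m : ℝ)) * h ^ α := by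
      have e : 18 * (2:ℝ) ^ (α * (m : ℝ)) * h ^ α = 18 * ((2:ℝ) ^ m * h) ^ α := by
        rw [mul_assoc, hwα]
      rw [e]
      have hb1 : ((1:ℝ)/2) ^ α ≤ ((2:ℝ) ^ m * h) ^ α :=
        Real.rpow_le_rpow (by norm_num) hcr (by linarith)
      have hb2 : ((1:ℝ)/2) ^ (2:ℝ) ≤ ((1:ℝ)/2) ^ α :=
        Real.rpow_le_rpow_of_exponent_ge (by norm_num) (by norm_num) hα2
      have hb3 : ((1:ℝ)/2) ^ (2:ℝ) = 1/4 := by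
        rw [show (2:ℝ) = ((2:ℕ):ℝ) by norm_num, Real.rpow_natCast]
        norm_num
      linarith
    rw [abs_le] at b1 b2 b3
    rw [abs_le]
    constructor <;> [linarith [b1.1, b2.2, b3.1]; linarith [b1.2, b2.1, b3.2]]
  · -- fine case
    set j₀ := Nat.floor ((2:ℝ) ^ m * t) with hj0def
    have hle : (j₀ : ℝ) ≤ (2:ℝ) ^ m * t := Nat.floor_le (by positivity)
    have hlt : (2:ℝ) ^ m * t < j₀ + 1 := Nat.lt_floor_add_one _
    have htlt1 : t < 1 := by linarith
    have hj0N : j₀ < 2 ^ m := by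
      rw [hj0def, Nat.floor_lt (by positivity)]
      push_cast
      nlinarith
    have hagree : ∀ p, t ≤ p → p ≤ t + 2 * h → Sg m y p =
        Yf m y j₀ * psiQ ((2:ℝ) ^ m * p - (j₀ : ℝ))
          + Yf m y (j₀ + 1) * psiQ ((2:ℝ) ^ m * p - ((j₀ : ℝ) + 1)) := by
      intro p hp1 hp2
      have hpm : (2:ℝ) ^ m * p ≤ (2:ℝ) ^ m * t + 2 * ((2:ℝ) ^ m * h) := by nlinarith
      have hpm' : (j₀ : ℝ) ≤ (2:ℝ) ^ m * p := le_trans hle (by nlinarith)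
      have hvan : ∀ j ∈ Finset.range (2 ^ m), ¬(j = j₀ ∨ j = j₀ + 1) →
          Yf m y j * psiQ ((2:ℝ) ^ m * p - j) = 0 := by
        intro j _ hj
        push_neg at hj
        rcases lt_or_gt_of_ne hj.1 with hl | hg
        · have hc : (j : ℝ) + 1 ≤ (j₀ : ℝ) := by exact_mod_cast hl
          rw [psiQ_zero_right (by linarith), mul_zero]
        · have hj2 : j₀ + 2 ≤ j := by omega
          have hc : (j₀ : ℝ) + 2 ≤ (j : ℝ) := by exact_mod_cast hj2
          rw [psiQ_zero_left (by linarith), mul_zero]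
      have step1 : Sg m y p =
          ∑ j ∈ Finset.range (2 ^ m),
            (if j = j₀ ∨ j = j₀ + 1 then Yf m y j * psiQ ((2:ℝ) ^ m * p - j) else 0) := by
        rw [Sg]
        apply Finset.sum_congr rfl
        intro j hj
        by_cases hc : j = j₀ ∨ j = j₀ + 1
        · rw [if_pos hc]
        · rw [if_neg hc, hvan j hj hc]
      rw [step1, ← Finset.sum_filter]
      by_cases hcase : j₀ + 1 < 2 ^ m
      · have hfil : (Finset.range (2 ^ m)).filter (fun j => j = j₀ ∨ j = j₀ + 1)
            = {j₀, j₀ + 1} := by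
          ext a
          simp only [Finset.mem_filter, Finset.mem_range, Finset.mem_insert, Finset.mem_singleton]
          omega
        rw [hfil, Finset.sum_insert (by simp), Finset.sum_singleton]
        push_cast
        ring
      · have hfil : (Finset.range (2 ^ m)).filter (fun j => j = j₀ ∨ j = j₀ + 1) = {j₀} := by
          ext a
          simp only [Finset.mem_filter, Finset.mem_range, Finset.mem_singleton]
          omega
        rw [hfil, Finset.sum_singleton]
        have hB0 : Yf m y (j₀ + 1) = 0 := by
          unfold Yf
          rw [dif_neg hcase]
        rw [hB0]
        ring
    -- derivative facts
    have hG : ∀ p, HasDerivAt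
        (fun q => Yf m y j₀ * psiQ ((2:ℝ) ^ m * q - (j₀ : ℝ))
          + Yf m y (j₀ + 1) * psiQ ((2:ℝ) ^ m * q - ((j₀ : ℝ) + 1)))
        (Yf m y j₀ * ((2:ℝ) ^ m * (3 * Dre (3 * ((2:ℝ) ^ m * p - (j₀ : ℝ)))))
          + Yf m y (j₀ + 1) * ((2:ℝ) ^ m * (3 * Dre (3 * ((2:ℝ) ^ m * p - ((j₀ : ℝ) + 1)))))) p :=
      fun p => ((hpsiM p).const_mul _).add ((hpsiM p).const_mul _)
    have hz2m : (2:ℝ) ^ m * (((j₀ : ℝ) + 1) / (2:ℝ) ^ m) = (j₀ : ℝ) + 1 := by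
      field_simp
    have hlip : ∀ s p : ℝ,
        |(Yf m y j₀ * ((2:ℝ) ^ m * (3 * Dre (3 * ((2:ℝ) ^ m * p - (j₀ : ℝ)))))
            + Yf m y (j₀ + 1) * ((2:ℝ) ^ m * (3 * Dre (3 * ((2:ℝ) ^ m * p - ((j₀ : ℝ) + 1))))))
          - (Yf m y j₀ * ((2:ℝ) ^ m * (3 * Dre (3 * ((2:ℝ) ^ m * s - (j₀ : ℝ)))))
            + Yf m y (j₀ + 1) * ((2:ℝ) ^ m * (3 * Dre (3 * ((2:ℝ) ^ m * s - ((j₀ : ℝ) + 1))))))|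
          ≤ 18 * ((2:ℝ) ^ m) ^ 2 * |p - s| := by
      intro s p
      apply glue_lip (Yf_abs hy j₀) (Yf_abs hy (j₀ + 1))
        (fun s p => lipE (le_of_lt h2m) s p) (fun s p => lipE (le_of_lt h2m) s p)
        (z := ((j₀ : ℝ) + 1) / (2:ℝ) ^ m)
      · intro q hq
        have hq' : (j₀ : ℝ) + 1 ≤ (2:ℝ) ^ m * q := by
          calc (j₀ : ℝ) + 1 = (2:ℝ) ^ m * (((j₀ : ℝ) + 1) / (2:ℝ) ^ m) := hz2m.symm
            _ ≤ (2:ℝ) ^ m * q := by nlinarith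
        rw [Dre_zero_right (by linarith)]
        ring
      · intro q hq
        have hq' : (2:ℝ) ^ m * q ≤ (j₀ : ℝ) + 1 := by
          calc (2:ℝ) ^ m * q ≤ (2:ℝ) ^ m * (((j₀ : ℝ) + 1) / (2:ℝ) ^ m) := by nlinarith
            _ = (j₀ : ℝ) + 1 := hz2m
        rw [Dre_zero_left (by linarith)]
        ring
    have key := zygmund hG hlip hh (x := t)
    rw [hagree t le_rfl (by linarith), hagree (t + h) (by linarith) (by linarith),
      hagree (t + 2 * h) (by linarith) le_rfl]
    have hw2 : ((2:ℝ) ^ m * h) ^ (2:ℕ) ≤ ((2:ℝ) ^ m * h) ^ α := by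
      have hr := Real.rpow_le_rpow_of_exponent_ge hwpos (by linarith : (2:ℝ) ^ m * h ≤ 1) hα2
      rwa [show ((2:ℝ) ^ m * h) ^ (2:ℝ) = ((2:ℝ) ^ m * h) ^ (2:ℕ) by
        rw [← Real.rpow_natCast ((2:ℝ) ^ m * h) 2]; norm_num] at hr
    calc |Yf m y j₀ * psiQ ((2:ℝ) ^ m * (t + 2 * h) - (j₀ : ℝ))
            + Yf m y (j₀ + 1) * psiQ ((2:ℝ) ^ m * (t + 2 * h) - ((j₀ : ℝ) + 1))
          - 2 * (Yf m y j₀ * psiQ ((2:ℝ) ^ m * (t + h) - (j₀ : ℝ))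
            + Yf m y (j₀ + 1) * psiQ ((2:ℝ) ^ m * (t + h) - ((j₀ : ℝ) + 1)))
          + (Yf m y j₀ * psiQ ((2:ℝ) ^ m * t - (j₀ : ℝ))
            + Yf m y (j₀ + 1) * psiQ ((2:ℝ) ^ m * t - ((j₀ : ℝ) + 1)))|
        ≤ 18 * ((2:ℝ) ^ m) ^ 2 * h ^ 2 := key
      _ = 18 * ((2:ℝ) ^ m * h) ^ (2:ℕ) := by ring
      _ ≤ 18 * ((2:ℝ) ^ m * h) ^ α := by linarith
      _ = 18 * (2:ℝ) ^ (α * (m : ℝ)) * h ^ α := by rw [mul_assoc, hwα]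

end FyAux
namespace FyAux

noncomputable def DD (c : ℝ) (φ : ℝ → ℝ) : ℝ → ℝ := fun t => φ (t + 2 * c) - 2 * φ (t + c) + φ t

variable {d : ℕ}

lemma tensor_split (F : Fin d → ℝ → ℝ) (x : Fin d → ℝ) (i : Fin d) :
    ∏ j, F j (x j) = F i (x i) * ∏ j ∈ Finset.univ.erase i, F j (x j) :=
  (Finset.mul_prod_erase _ _ (Finset.mem_univ i)).symm

lemma prod_update_point (F : Fin d → ℝ → ℝ) (x : Fin d → ℝ) (i : Fin d) (a : ℝ) :
    ∏ j, F j (Function.update x i a j) = F i a * ∏ j ∈ Finset.univ.erase i, F j (x j) := by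
  rw [← Finset.mul_prod_erase Finset.univ (fun j => F j (Function.update x i a j))
    (Finset.mem_univ i)]
  congr 1
  · rw [Function.update_self]
  · exact Finset.prod_congr rfl fun j hj => by
      rw [Function.update_of_ne (Finset.ne_of_mem_erase hj)]

lemma prod_update_family (F : Fin d → ℝ → ℝ) (G : ℝ → ℝ) (x : Fin d → ℝ) (i : Fin d) :
    ∏ j, Function.update F i G j (x j) = G (x i) * ∏ j ∈ Finset.univ.erase i, F j (x j) := by
  rw [← Finset.mul_prod_erase Finset.univ (fun j => Function.update F i G j (x j))
    (Finset.mem_univ i)]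
  congr 1
  · rw [Function.update_self]
  · exact Finset.prod_congr rfl fun j hj => by
      rw [Function.update_of_ne (Finset.ne_of_mem_erase hj)]

lemma delta2_tensor (i : Fin d) (c : ℝ) (F : Fin d → ℝ → ℝ) :
    delta2 i c (fun x => ∏ j, F j (x j))
      = fun x => ∏ j, Function.update F i (DD c (F i)) j (x j) := by
  funext x
  simp only [delta2]
  rw [prod_update_point, prod_update_point, prod_update_family, tensor_split F x i]
  simp only [DD]
  ring

lemma foldr_tensor (h : Fin d → ℝ) (F : Fin d → ℝ → ℝ) :
    ∀ l : List (Fin d), l.Nodup →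
      (l.foldr (fun i g => delta2 i (h i) g) (fun x => ∏ j, F j (x j)))
        = fun x => ∏ j, (if j ∈ l then DD (h j) (F j) else F j) (x j) := by
  intro l
  induction l with
  | nil => intro _; simp
  | cons a l ih =>
    intro hl
    have hal : a ∉ l := (List.nodup_cons.1 hl).1
    rw [List.foldr_cons, ih (List.nodup_cons.1 hl).2, delta2_tensor]
    funext x
    apply Finset.prod_congr rfl
    intro j _
    by_cases hj : j = a
    · subst hj
      rw [Function.update_self, if_neg hal, if_pos List.mem_cons_self]
    · rw [Function.update_of_ne hj]
      by_cases hjl : j ∈ l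
      · rw [if_pos hjl, if_pos (List.mem_cons_of_mem a hjl)]
      · rw [if_neg hjl, if_neg (by simp [List.mem_cons, hj, hjl])]

lemma deltaMixed_tensor (u : Finset (Fin d)) (h : Fin d → ℝ) (F : Fin d → ℝ → ℝ)
    (x : Fin d → ℝ) :
    deltaMixed u h (fun x => ∏ j, F j (x j)) x
      = ∏ j, (if j ∈ u then DD (h j) (F j) else F j) (x j) := by
  simp only [deltaMixed]
  rw [foldr_tensor h F u.toList u.nodup_toList]
  apply Finset.prod_congr rfl
  intro j _
  simp [Finset.mem_toList]

end FyAux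
end
/-- construction in the proof of Theorem 4.8 of the paper: the
function `f_y` built from quadratic B-splines belongs to the unit ball `Ů^α_∞` of the
Hölder–Zygmund space of mixed smoothness (in particular it is continuous, vanishes on
the boundary of the cube, and all its mixed second differences obey the `Ů^α_∞`
bounds). -/
theorem fy_mem_unit_ball (d : ℕ) (hd : 0 < d) (α : ℝ) (hα1 : 1 < α) (hα2 : α ≤ 2)
    (m : ℕ) (y : Fin (2 ^ m) → ℝ) (hy : ∀ j, y j = 0 ∨ y j = 1) :
    UnitBallHZ d α (fun x =>
      ((18:ℝ) ^ d)⁻¹ * (2:ℝ) ^ (-(α * (m:ℝ))) *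
        (∑ j : Fin (2 ^ m), y j * psiks m ((j:ℕ) + 1) (x ⟨0, hd⟩)) *
        ∏ i ∈ Finset.univ.erase (⟨0, hd⟩ : Fin d), psiks 0 1 (x i)) := by
  classical
  set i₀ : Fin d := ⟨0, hd⟩ with hi₀
  set F : Fin d → ℝ → ℝ := Function.update (fun _ : Fin d => fun t : ℝ => (18:ℝ)⁻¹ * psiQ t) i₀
    (fun t : ℝ => (18:ℝ)⁻¹ * ((2:ℝ) ^ (-(α * (m:ℝ))) * FyAux.Sg m y t)) with hFdef
  have hFi₀ : F i₀ = fun t : ℝ => (18:ℝ)⁻¹ * ((2:ℝ) ^ (-(α * (m:ℝ))) * FyAux.Sg m y t) := by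
    rw [hFdef, Function.update_self]
  have hFne : ∀ i : Fin d, i ≠ i₀ → F i = fun t : ℝ => (18:ℝ)⁻¹ * psiQ t := by
    intro i hi
    rw [hFdef, Function.update_of_ne hi]
  have hFeq : (fun x : Fin d → ℝ =>
      ((18:ℝ) ^ d)⁻¹ * (2:ℝ) ^ (-(α * (m:ℝ))) *
        (∑ j : Fin (2 ^ m), y j * psiks m ((j:ℕ) + 1) (x i₀)) *
        ∏ i ∈ Finset.univ.erase i₀, psiks 0 1 (x i)) = fun x => ∏ i, F i (x i) := by
    funext x
    rw [FyAux.gsum_eq_Sg, FyAux.tensor_split F x i₀, hFi₀]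
    have h2 : ∏ i ∈ Finset.univ.erase i₀, F i (x i)
        = ((18:ℝ)⁻¹) ^ (d - 1) * ∏ i ∈ Finset.univ.erase i₀, psiQ (x i) := by
      rw [show ∏ i ∈ Finset.univ.erase i₀, F i (x i)
          = ∏ i ∈ Finset.univ.erase i₀, ((18:ℝ)⁻¹ * psiQ (x i)) from
        Finset.prod_congr rfl fun i hi => by rw [hFne i (Finset.ne_of_mem_erase hi)]]
      rw [Finset.prod_mul_distrib, Finset.prod_const,
        Finset.card_erase_of_mem (Finset.mem_univ i₀), Finset.card_univ, Fintype.card_fin]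
    have h3 : ∏ i ∈ Finset.univ.erase i₀, psiks 0 1 (x i)
        = ∏ i ∈ Finset.univ.erase i₀, psiQ (x i) := by
      apply Finset.prod_congr rfl
      intro i _
      unfold psiks
      norm_num
    rw [h2, h3]
    have hd1 : ((18:ℝ) ^ d)⁻¹ = (18:ℝ)⁻¹ * ((18:ℝ)⁻¹) ^ (d - 1) := by
      rw [← inv_pow]
      conv_lhs => rw [show d = (d - 1) + 1 from (Nat.succ_pred_eq_of_pos hd).symm]
      rw [pow_succ]
      ring
    rw [hd1]
    ring
  rw [hFeq]
  have hψc : Continuous psiQ :=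
    continuous_iff_continuousAt.2 fun p => (FyAux.hpsiQ' p).differentiableAt.continuousAt
  refine ⟨?_, ?_, ?_⟩
  · -- continuity
    have hSgc : Continuous (FyAux.Sg m y) := by
      apply continuous_finset_sum
      intro j _
      exact continuous_const.mul
        (hψc.comp' ((continuous_const.mul continuous_id).sub continuous_const))
    have hFc : ∀ i, Continuous (F i) := by
      intro i
      by_cases hi : i = i₀
      · rw [hi, hFi₀]
        exact continuous_const.mul (continuous_const.mul hSgc)
      · rw [hFne i hi]
        exact continuous_const.mul hψc
    exact (continuous_finset_prod Finset.univ fun i _ =>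
      (hFc i).comp' (continuous_apply i)).continuousOn
  · -- boundary
    rintro x - ⟨j, hj⟩
    show ∏ i, F i (x i) = 0
    apply Finset.prod_eq_zero (Finset.mem_univ j)
    by_cases hji : j = i₀
    · rw [hji] at hj ⊢
      rw [hFi₀]
      have hSg0 : FyAux.Sg m y (x i₀) = 0 := by
        rcases hj with h0 | h1
        · rw [h0]; exact FyAux.Sg_zero0 y
        · rw [h1]; exact FyAux.Sg_zero1 y
      show (18:ℝ)⁻¹ * ((2:ℝ) ^ (-(α * (m:ℝ))) * FyAux.Sg m y (x i₀)) = 0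
      rw [hSg0]
      ring
    · rw [hFne j hji]
      have hψ0 : psiQ (x j) = 0 := by
        rcases hj with h0 | h1
        · rw [h0]; exact FyAux.psiQ_zero_left le_rfl
        · rw [h1]; exact FyAux.psiQ_zero_right le_rfl
      show (18:ℝ)⁻¹ * psiQ (x j) = 0
      rw [hψ0]
      ring
  · -- main bound
    intro u x h hx hu
    have hx' : ∀ i, 0 ≤ x i ∧ x i ≤ 1 := by
      intro i
      have h1 := hx.1 i
      have h2 := hx.2 i
      simp only [Pi.zero_apply, Pi.one_apply] at h1 h2
      exact ⟨h1, h2⟩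
    rw [FyAux.deltaMixed_tensor]
    calc |∏ i, (if i ∈ u then FyAux.DD (h i) (F i) else F i) (x i)|
        = ∏ i, |(if i ∈ u then FyAux.DD (h i) (F i) else F i) (x i)| := Finset.abs_prod _ _
      _ ≤ ∏ i, (if i ∈ u then h i ^ α else 1) := ?_
      _ = ∏ i ∈ u, h i ^ α := by rw [Finset.prod_ite_mem, Finset.univ_inter]
    apply Finset.prod_le_prod (fun i _ => abs_nonneg _)
    intro i _
    by_cases hiu : i ∈ u
    · rw [if_pos hiu, if_pos hiu]
      obtain ⟨hh0, hh1⟩ := hu i hiu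
      by_cases hii : i = i₀
      · have hFi : F i = fun t : ℝ => (18:ℝ)⁻¹ * ((2:ℝ) ^ (-(α * (m:ℝ))) * FyAux.Sg m y t) := by
          rw [hii, hFi₀]
        rw [hFi]
        simp only [FyAux.DD]
        have hmain := FyAux.Sg_delta2 hy hα1 hα2 (hx' i).1 hh0 hh1
        rw [show (18:ℝ)⁻¹ * ((2:ℝ) ^ (-(α * (m:ℝ))) * FyAux.Sg m y (x i + 2 * h i))
            - 2 * ((18:ℝ)⁻¹ * ((2:ℝ) ^ (-(α * (m:ℝ))) * FyAux.Sg m y (x i + h i)))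
            + (18:ℝ)⁻¹ * ((2:ℝ) ^ (-(α * (m:ℝ))) * FyAux.Sg m y (x i))
          = ((18:ℝ)⁻¹ * (2:ℝ) ^ (-(α * (m:ℝ)))) *
            (FyAux.Sg m y (x i + 2 * h i) - 2 * FyAux.Sg m y (x i + h i) + FyAux.Sg m y (x i))
          by ring, abs_mul, abs_of_nonneg (by positivity)]
        calc ((18:ℝ)⁻¹ * (2:ℝ) ^ (-(α * (m:ℝ)))) *
              |FyAux.Sg m y (x i + 2 * h i) - 2 * FyAux.Sg m y (x i + h i) + FyAux.Sg m y (x i)|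
            ≤ ((18:ℝ)⁻¹ * (2:ℝ) ^ (-(α * (m:ℝ)))) * (18 * (2:ℝ) ^ (α * (m:ℝ)) * h i ^ α) :=
              mul_le_mul_of_nonneg_left hmain (by positivity)
          _ = h i ^ α := by
              rw [show (2:ℝ) ^ (-(α * (m:ℝ))) = ((2:ℝ) ^ (α * (m:ℝ)))⁻¹ from
                Real.rpow_neg (by norm_num) _]
              have hne : (2:ℝ) ^ (α * (m:ℝ)) ≠ 0 :=
                ne_of_gt (Real.rpow_pos_of_pos (by norm_num) _)
              field_simp
      · rw [hFne i hii]
        simp only [FyAux.DD]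
        have hhle : h i ≤ 1 := by linarith [(hx' i).1]
        have hzy := FyAux.psiQ_delta2 (τ := x i) hh0
        rw [show (18:ℝ)⁻¹ * psiQ (x i + 2 * h i) - 2 * ((18:ℝ)⁻¹ * psiQ (x i + h i))
            + (18:ℝ)⁻¹ * psiQ (x i)
          = (18:ℝ)⁻¹ * (psiQ (x i + 2 * h i) - 2 * psiQ (x i + h i) + psiQ (x i)) by ring,
          abs_mul, abs_of_nonneg (by norm_num : (0:ℝ) ≤ (18:ℝ)⁻¹)]
        calc (18:ℝ)⁻¹ * |psiQ (x i + 2 * h i) - 2 * psiQ (x i + h i) + psiQ (x i)|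
            ≤ (18:ℝ)⁻¹ * (18 * h i ^ 2) := mul_le_mul_of_nonneg_left hzy (by norm_num)
          _ = h i ^ (2:ℕ) := by ring
          _ ≤ h i ^ α := FyAux.pow2_le_rpow hh0 hhle hα1 hα2
    · rw [if_neg hiu, if_neg hiu]
      by_cases hii : i = i₀
      · have hFi : F i = fun t : ℝ => (18:ℝ)⁻¹ * ((2:ℝ) ^ (-(α * (m:ℝ))) * FyAux.Sg m y t) := by
          rw [hii, hFi₀]
        rw [hFi]
        have hb := FyAux.Sg_abs_le hy (hx' i).1
        show |(18:ℝ)⁻¹ * ((2:ℝ) ^ (-(α * (m:ℝ))) * FyAux.Sg m y (x i))| ≤ 1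
        rw [abs_mul, abs_mul]
        have h2b : |(2:ℝ) ^ (-(α * (m:ℝ)))| ≤ 1 := by
          rw [abs_of_nonneg (Real.rpow_nonneg (by norm_num) _)]
          apply Real.rpow_le_one_of_one_le_of_nonpos (by norm_num)
          have : (0:ℝ) ≤ α * (m:ℝ) := by positivity
          linarith
        have h18 : |(18:ℝ)⁻¹| = (18:ℝ)⁻¹ := abs_of_nonneg (by norm_num)
        rw [h18]
        calc (18:ℝ)⁻¹ * (|(2:ℝ) ^ (-(α * (m:ℝ)))| * |FyAux.Sg m y (x i)|)
            ≤ (18:ℝ)⁻¹ * (1 * (3/4)) := by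
              apply mul_le_mul_of_nonneg_left _ (by norm_num)
              exact mul_le_mul h2b hb (abs_nonneg _) zero_le_one
          _ ≤ 1 := by norm_num
      · rw [hFne i hii]
        show |(18:ℝ)⁻¹ * psiQ (x i)| ≤ 1
        rw [abs_mul, abs_of_nonneg (by norm_num : (0:ℝ) ≤ (18:ℝ)⁻¹)]
        calc (18:ℝ)⁻¹ * |psiQ (x i)| ≤ (18:ℝ)⁻¹ * (3/4) :=
            mul_le_mul_of_nonneg_left (FyAux.psiQ_abs_le _) (by norm_num)
          _ ≤ 1 := by norm_num
end

section
/- Let d ≥ 2, β > 1, m ∈ ℕ and j ∈ {0,1,…,m}. Then the number of multi-indices k ∈ ℕ₀^d with |k|_1 = m − j and |k|_∞ ≥ m − ⌊βj⌋ is at most d · C(d−1+⌊(β−1)j⌋, d−1), where C(·,·) denotes the binomial coefficient. -/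
open MeasureTheory Finset
open scoped ENNReal NNReal

/-- counting estimate in the proof of Lemma A.2 of the paper: the
number of `k ∈ ℕ₀^d` with `|k|_1 = m - j` and `|k|_∞ ≥ m - ⌊βj⌋` is at most
`d · C(d-1+⌊(β-1)j⌋, d-1)`. -/
theorem count_multiindices (d : ℕ) (hd : 2 ≤ d) (β : ℝ) (hβ : 1 < β) (m : ℕ)
    (hm : 1 ≤ m) (j : ℕ) (hj : j ≤ m) :
    {k : Fin d → ℕ | (∑ i, k i) + j = m ∧
        (m : ℤ) - ⌊β * (j : ℝ)⌋ ≤ ((Finset.univ.sup k : ℕ) : ℤ)}.ncard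
      ≤ d * Nat.choose (d - 1 + (⌊(β - 1) * (j : ℝ)⌋).toNat) (d - 1) := by
  classical
  set N : ℕ := (⌊(β - 1) * (j : ℝ)⌋).toNat with hN
  have hfloor : ⌊(β - 1) * (j : ℝ)⌋ = ⌊β * (j : ℝ)⌋ - j := by
    rw [sub_mul, one_mul]
    rw [show β * (j:ℝ) - (j:ℝ) = β * (j:ℝ) - ((j:ℤ):ℝ) by push_cast; ring]
    exact Int.floor_sub_intCast _ _
  set T : Finset (Fin d → ℕ) := (Finset.piAntidiag Finset.univ (m - j)).filter
    (fun k => (m : ℤ) - ⌊β * (j:ℝ)⌋ ≤ ((Finset.univ.sup k : ℕ) : ℤ)) with hT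
  haveI : Nonempty (Fin d) := ⟨⟨0, by omega⟩⟩
  have hS : {k : Fin d → ℕ | (∑ i, k i) + j = m ∧
      (m : ℤ) - ⌊β * (j : ℝ)⌋ ≤ ((Finset.univ.sup k : ℕ) : ℤ)} = ↑T := by
    ext k
    constructor
    · rintro ⟨h1, h2⟩
      simp only [hT, Finset.mem_coe, Finset.mem_filter, Finset.mem_piAntidiag]
      have he : Finset.univ.sum k = ∑ i, k i := rfl
      exact ⟨⟨by omega, fun i _ => Finset.mem_univ i⟩, h2⟩
    · intro hk
      simp only [hT, Finset.mem_coe, Finset.mem_filter, Finset.mem_piAntidiag] at hk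
      obtain ⟨⟨h1, -⟩, h2⟩ := hk
      have he : Finset.univ.sum k = ∑ i, k i := rfl
      exact ⟨by omega, h2⟩
  rw [hS, Set.ncard_coe_finset]
  set Ti : Fin d → Finset (Fin d → ℕ) := fun i =>
    (Finset.piAntidiag Finset.univ (m - j)).filter
      (fun k => (m : ℤ) - ⌊β * (j:ℝ)⌋ ≤ ((k i : ℕ) : ℤ)) with hTi
  have hsub : T ⊆ Finset.univ.biUnion Ti := by
    intro k hk
    rw [hT, Finset.mem_filter] at hk
    obtain ⟨i, _, hi⟩ := Finset.exists_mem_eq_sup Finset.univ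
      (Finset.univ_nonempty (α := Fin d)) k
    refine Finset.mem_biUnion.2 ⟨i, Finset.mem_univ i, ?_⟩
    rw [hTi, Finset.mem_filter]
    refine ⟨hk.1, ?_⟩
    rw [hi] at hk
    exact hk.2
  have hcard_i : ∀ i, (Ti i).card ≤ Nat.choose (d - 1 + N) (d - 1) := by
    intro i
    -- injection into piAntidiag univ N
    have hinj : ∀ k ∈ Ti i, Function.update k i (N - ∑ l ∈ Finset.univ.erase i, k l)
        ∈ Finset.piAntidiag (Finset.univ : Finset (Fin d)) N := by
      intro k hk
      rw [hTi, Finset.mem_filter, Finset.mem_piAntidiag] at hk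
      obtain ⟨⟨hsum, -⟩, hki⟩ := hk
      have hsum' : (∑ l ∈ Finset.univ.erase i, k l) + k i = m - j := by
        rw [Finset.sum_erase_add _ _ (Finset.mem_univ i)]; exact hsum
      have hki_le : k i ≤ m - j := by omega
      have hs_le : (∑ l ∈ Finset.univ.erase i, k l) ≤ N := by
        have h2 : (⌊(β - 1) * (j:ℝ)⌋ : ℤ) ≤ (N : ℤ) := Int.self_le_toNat _
        omega
      rw [Finset.mem_piAntidiag]
      refine ⟨?_, fun l _ => Finset.mem_univ l⟩
      rw [← Finset.sum_erase_add _ _ (Finset.mem_univ i), Function.update_self]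
      rw [Finset.sum_congr rfl (fun l hl => Function.update_of_ne (Finset.ne_of_mem_erase hl) _ _)]
      omega
    have hinjOn : ∀ k ∈ Ti i, ∀ k' ∈ Ti i,
        Function.update k i (N - ∑ l ∈ Finset.univ.erase i, k l) =
        Function.update k' i (N - ∑ l ∈ Finset.univ.erase i, k' l) → k = k' := by
      intro k hk k' hk' heq
      have hrest : ∀ l, l ≠ i → k l = k' l := by
        intro l hl
        have := congr_fun heq l
        rwa [Function.update_of_ne hl, Function.update_of_ne hl] at this
      have hseq : (∑ l ∈ Finset.univ.erase i, k l) = ∑ l ∈ Finset.univ.erase i, k' l :=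
        Finset.sum_congr rfl (fun l hl => hrest l (Finset.ne_of_mem_erase hl))
      rw [hTi, Finset.mem_filter, Finset.mem_piAntidiag] at hk hk'
      have h1 : (∑ l ∈ Finset.univ.erase i, k l) + k i = m - j := by
        rw [Finset.sum_erase_add _ _ (Finset.mem_univ i)]; exact hk.1.1
      have h2 : (∑ l ∈ Finset.univ.erase i, k' l) + k' i = m - j := by
        rw [Finset.sum_erase_add _ _ (Finset.mem_univ i)]; exact hk'.1.1
      funext l
      by_cases hl : l = i
      · subst hl; omega
      · exact hrest l hl
    have := Finset.card_le_card_of_injOn _ hinj hinjOn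
    refine this.trans ?_
    -- card of piAntidiag univ N
    have hmap := Finset.map_sym_eq_piAntidiag (Finset.univ : Finset (Fin d)) N
    rw [← hmap, Finset.card_map, Finset.sym_univ, Finset.card_univ,
      Sym.card_sym_fin_eq_multichoose, Nat.multichoose_eq]
    have : d + N - 1 = d - 1 + N := by omega
    rw [this]
    rw [Nat.add_comm (d-1) N, Nat.choose_symm_add]
  calc T.card ≤ (Finset.univ.biUnion Ti).card := Finset.card_le_card hsub
    _ ≤ ∑ i : Fin d, (Ti i).card := Finset.card_biUnion_le
    _ ≤ ∑ _i : Fin d, Nat.choose (d - 1 + N) (d - 1) := Finset.sum_le_sum (fun i _ => hcard_i i)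
    _ = d * Nat.choose (d - 1 + N) (d - 1) := by simp [Finset.sum_const, Finset.card_univ, mul_comm]
end
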